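/- arXiv:1211.3708 — 4 statements merged into one kernel-verified Lean document; each statement's English description precedes it below -/
import Mathlib

section
/- For every integer N ≥ 2 there exist an integer e ≥ 1 and an O-sequence (h_0 = 1, h_1, ..., h_{e+1}) of nonnegative integers such that the sequence (f_{-1} = 1, f_0, f_1, ..., f_e) defined by f_{k-1} = Σ_{i=0}^{k} C(e+1-i, k-i)·h_i for k = 0, 1, ..., e+1 is nonunimodal with exactly N peaks. -/
/-
Take `d = 4·8^N` (so `e = d - 1`) and widths `m_t = 4·8^t` for `1 ≤ t ≤ N`, and let `h` start at
`1` and jump by `λ_t` at `s_t = d + 1 - m_t`. Read backwards, the resulting `f` is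
`C(d+1, j) + ∑ λ_t C(m_t, j)`, a sum of binomial rows of geometrically growing widths. The weights
`λ_t = 4 C(m_{t+1}, m_t) λ_{t+1}` are large enough for row `t` to dominate all wider rows (and the
base row) on its descending half, and small enough for row `t + 1`, still ascending, to outweigh the
drop of row `t` to zero at `j = m_t`. Hence `f` has exactly one peak per row, at `j = m_t / 2`.
The O-sequence condition holds because `h_i ≥ λ_N` is so large that Macaulay's bound `h_i^{<i>}`
exceeds `h_i` by a factor larger than every jump ratio `λ_t / λ_{t+1} ≤ 4·2^d`.
-/

/-- `macaulayBound i n` is the Macaulay upper bound `n^{<i>}`, computed greedily from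
the `i`-binomial expansion of `n`:  if `n = C(n_i,i) + C(n_{i-1},i-1) + ⋯ + C(n_j,j)`
with `n_i > n_{i-1} > ⋯ > n_j ≥ j ≥ 1`, then
`n^{<i>} = C(n_i+1,i+1) + C(n_{i-1}+1,i) + ⋯ + C(n_j+1,j+1)`.
By convention `macaulayBound 0 n = 0` and `macaulayBound i 0 = 0`. -/
def macaulayBound : ℕ → ℕ → ℕ
  | 0, _ => 0
  | _ + 1, 0 => 0
  | i + 1, n + 1 =>
      let m := Nat.findGreatest (fun m => Nat.choose m (i + 1) ≤ n + 1) (n + i + 2)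
      Nat.choose (m + 1) (i + 2) + macaulayBound i (n + 1 - Nat.choose m (i + 1))

/-- `IsPeak L g i`: position `i` is a peak of the finite sequence `g 0, …, g (L-1)`:
the entry at `i` is strictly greater than the preceding entry (or `i` is the first
position) and strictly greater than the following entry (or `i` is the last position). -/
def IsPeak (L : ℕ) (g : ℕ → ℕ) (i : ℕ) : Prop :=
  i < L ∧ (i = 0 ∨ g (i - 1) < g i) ∧ (i + 1 = L ∨ g (i + 1) < g i)

/-- `IsPureFVector e f`: `(1, f 0, …, f e)` is a pure f-vector, i.e. there are a finite
set `V` and a nonempty family `F` of `(e+1)`-element subsets of `V` such that, for each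
`i ≤ e`, `f i` is the number of `(i+1)`-element subsets of `V` contained in at least one
member of `F`. -/
def IsPureFVector (e : ℕ) (f : ℕ → ℕ) : Prop :=
  ∃ (V : Finset ℕ) (F : Finset (Finset ℕ)), F.Nonempty ∧
    (∀ S ∈ F, S ⊆ V ∧ S.card = e + 1) ∧
    ∀ i ≤ e, f i = ((V.powersetCard (i + 1)).filter (fun T => ∃ S ∈ F, T ⊆ S)).card

/-- The sequence `(1, f 0, f 1, …)` attached to an f-vector `f`. -/
def seqOf (f : ℕ → ℕ) : ℕ → ℕ := fun k => if k = 0 then 1 else f (k - 1)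

open Finset

namespace Nat

theorem choose_lt_choose_succ {n r : ℕ} (h : 2 * (r + 1) ≤ n) :
    n.choose r < n.choose (r + 1) := by
  refine Nat.lt_of_mul_lt_mul_right (a := r + 1) ?_
  rw [choose_succ_right_eq]
  exact Nat.mul_lt_mul_of_pos_left (by omega) (choose_pos (by omega))

theorem choose_succ_lt_choose {n r : ℕ} (h : n ≤ 2 * r) (hr : r ≤ n) :
    n.choose (r + 1) < n.choose r := by
  refine Nat.lt_of_mul_lt_mul_right (a := r + 1) ?_
  rw [choose_succ_right_eq]
  exact Nat.mul_lt_mul_of_pos_left (by omega) (choose_pos hr)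

theorem choose_le_choose_of_le_half {n a b : ℕ} (hab : a ≤ b) (h : 2 * b ≤ n) :
    n.choose a ≤ n.choose b := by
  induction b, hab using Nat.le_induction with
  | base => exact le_rfl
  | succ b _ ih => exact (ih (by omega)).trans (choose_le_succ_of_lt_half_left (by omega))

theorem add_one_le_choose_add (a : ℕ) {b : ℕ} (hb : 1 ≤ b) : a + 1 ≤ (a + b).choose b := by
  induction b, hb using Nat.le_induction with
  | base => simp
  | succ b _ ih => rw [← add_assoc, choose_succ_succ']; omega

theorem five_mul_choose_lt_choose_succ {m : ℕ} (hm : 3 ≤ m) :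
    5 * (8 * m).choose m < (8 * m).choose (m + 1) := by
  have hrec := choose_succ_right_eq (8 * m) m
  have hpos := choose_pos (show m ≤ 8 * m by omega)
  rw [show 8 * m - m = 7 * m by omega] at hrec
  nlinarith

end Nat

theorem sum_Ico_choose_sub {n k s : ℕ} (hk : k ≤ n) (hs : s ≤ k + 1) :
    ∑ i ∈ Ico s (k + 1), (n - i).choose (k - i) = (n + 1 - s).choose (n + 1 - k) := by
  induction hs using Nat.decreasingInduction with
  | self => rw [Ico_self, sum_empty, Nat.choose_eq_zero_of_lt (by omega)]
  | of_succ s hs ih =>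
    rw [sum_eq_sum_Ico_succ_bot hs, ih, show n + 1 - s = n - s + 1 by omega,
      show n + 1 - (s + 1) = n - s by omega, show n + 1 - k = n - k + 1 by omega,
      Nat.choose_succ_succ', Nat.choose_symm_of_eq_add (show n - s = k - s + (n - k) by omega)]

theorem sum_range_ite_choose_sub {n k : ℕ} (hk : k ≤ n) (s : ℕ) :
    ∑ i ∈ range (k + 1), (if s ≤ i then (n - i).choose (k - i) else 0) =
      (n + 1 - s).choose (n + 1 - k) := by
  rcases le_or_gt s (k + 1) with hs | hs
  · rw [← sum_filter, ← sum_Ico_choose_sub hk hs]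
    congr 1
    ext i
    simp only [mem_filter, mem_range, mem_Ico]
    omega
  · rw [sum_eq_zero fun i hi => if_neg (by simp only [mem_range] at hi; omega),
      Nat.choose_eq_zero_of_lt (by omega)]

theorem exists_macaulayBound_succ_eq (i n : ℕ) :
    ∃ m, m.choose (i + 1) ≤ n + 1 ∧ n + 1 < (m + 1).choose (i + 1) ∧
      macaulayBound (i + 1) (n + 1) =
        (m + 1).choose (i + 2) + macaulayBound i (n + 1 - m.choose (i + 1)) := by
  set m := Nat.findGreatest (fun m => m.choose (i + 1) ≤ n + 1) (n + i + 2)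
  have hspec : m.choose (i + 1) ≤ n + 1 :=
    Nat.findGreatest_spec (P := fun m => m.choose (i + 1) ≤ n + 1) (m := i + 1) (by omega)
      (by simp)
  refine ⟨m, hspec, ?_, rfl⟩
  by_contra! hle
  have htop : n + 1 + 1 ≤ (n + i + 2).choose (i + 1) := by
    simpa [show n + 1 + (i + 1) = n + i + 2 by omega] using
      Nat.add_one_le_choose_add (n + 1) (b := i + 1) (by omega)
  have hmle : m ≤ n + i + 2 := Nat.findGreatest_le _
  rcases hmle.lt_or_eq with hlt | heq
  · exact Nat.findGreatest_is_greatest (P := fun m => m.choose (i + 1) ≤ n + 1)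
      (n := n + i + 2) (k := m + 1) (by omega) (by omega) hle
  · rw [heq] at hspec; omega

theorem le_macaulayBound : ∀ i n : ℕ, n ≤ macaulayBound (i + 1) n
  | _, 0 => Nat.zero_le _
  | i, n + 1 => by
    obtain ⟨m, hle, hlt, heq⟩ := exists_macaulayBound_succ_eq i n
    have hrest : n + 1 - m.choose (i + 1) ≤ macaulayBound i (n + 1 - m.choose (i + 1)) := by
      cases i with
      | zero => simp only [zero_add, Nat.choose_one_right] at hle hlt ⊢; omega
      | succ i => exact le_macaulayBound i _
    have hpascal : (m + 1).choose (i + 2) = m.choose (i + 1) + m.choose (i + 2) :=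
      Nat.choose_succ_succ' m (i + 1)
    omega

theorem mul_le_macaulayBound {i v R : ℕ} (hv : ((i + 2) * R + i) ^ (i + 1) ≤ v) :
    v * R ≤ macaulayBound (i + 1) v := by
  obtain _ | n := v
  · simp
  obtain ⟨m, -, hlt, heq⟩ := exists_macaulayBound_succ_eq i n
  have hm : (i + 2) * R + i < m + 1 :=
    lt_of_pow_lt_pow_left₀ (i + 1) (by positivity)
      (hv.trans_lt (hlt.trans_le (Nat.choose_le_pow _ _)))
  have hrec : (m + 1).choose (i + 2) * (i + 2) = (m + 1).choose (i + 1) * (m + 1 - (i + 1)) :=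
    Nat.choose_succ_right_eq (m + 1) (i + 1)
  have key : (n + 1) * R * (i + 2) ≤ (m + 1).choose (i + 2) * (i + 2) := by
    rw [hrec]
    calc (n + 1) * R * (i + 2) = (n + 1) * ((i + 2) * R) := by ring
      _ ≤ (n + 1) * (m + 1 - (i + 1)) := Nat.mul_le_mul_left _ (by omega)
      _ ≤ _ := Nat.mul_le_mul_right _ hlt.le
  rw [heq]
  have := Nat.le_of_mul_le_mul_right key (by omega)
  omega

theorem isPeak_iff_of_rise_fall {L : ℕ} {g : ℕ → ℕ} {U : ℕ → Prop}
    (hrise : ∀ k, k + 1 < L → U k → g k < g (k + 1))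
    (hfall : ∀ k, k + 1 < L → ¬U k → g (k + 1) < g k) {j : ℕ} :
    IsPeak L g j ↔ j < L ∧ (j = 0 ∨ U (j - 1)) ∧ (j + 1 = L ∨ ¬U j) := by
  unfold IsPeak
  refine and_congr_right fun hj => and_congr (or_congr_right' fun hj0 => ?_)
    (or_congr_right' fun hjL => ?_)
  · have hprev : j - 1 + 1 = j := by omega
    refine ⟨fun hlt => ?_, fun hU => hprev ▸ hrise (j - 1) (by omega) hU⟩
    by_contra hU
    have := hprev ▸ hfall (j - 1) (by omega) hU
    omega
  · refine ⟨fun hlt hU => ?_, hfall j (by omega)⟩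
    have := hrise j (by omega) hU
    omega

namespace ManyPeaks

-- In the notation of the header: `dim N = d`, `width t = m_t`, `jumpPos N t = s_t`,
-- `weight N t = λ_t`, and `fReversed N j` is `f` read backwards.
def width (t : ℕ) : ℕ := 4 * 8 ^ t

def dim (N : ℕ) : ℕ := width N

def jumpPos (N t : ℕ) : ℕ := dim N + 1 - width t

def peakPos (N t : ℕ) : ℕ := dim N + 1 - width t / 2

-- Large enough for `mul_le_macaulayBound` (with `R = 4 * 2 ^ dim N + 1`) at every `i < dim N`.
def seed (N : ℕ) : ℕ := ((dim N + 1) * (4 * 2 ^ dim N + 1) + dim N) ^ dim N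

def weight (N t : ℕ) : ℕ := seed N * ∏ l ∈ Ico t N, 4 * (width (l + 1)).choose (width l)

def hVector (N i : ℕ) : ℕ := 1 + ∑ t ∈ Ioc 0 N, if jumpPos N t ≤ i then weight N t else 0

def fVector (N k : ℕ) : ℕ := ∑ i ∈ range (k + 1), (dim N - i).choose (k - i) * hVector N i

def bumps (N a b j : ℕ) : ℕ := ∑ t ∈ Ioc a b, weight N t * (width t).choose j

def fReversed (N j : ℕ) : ℕ := (dim N + 1).choose j + bumps N 0 N j

def InAscent (N k : ℕ) : Prop := k = 0 ∨ ∃ t ∈ Ioc 0 N, jumpPos N t ≤ k ∧ k < peakPos N t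

theorem width_succ (t : ℕ) : width (t + 1) = 8 * width t := by
  simp only [width, pow_succ]; ring

theorem width_mono {a b : ℕ} (h : a ≤ b) : width a ≤ width b :=
  Nat.mul_le_mul_left 4 (Nat.pow_le_pow_right (by norm_num) h)

theorem eight_mul_width_le {a b : ℕ} (h : a < b) : 8 * width a ≤ width b :=
  width_succ a ▸ width_mono h

theorem four_le_width (t : ℕ) : 4 ≤ width t :=
  Nat.le_mul_of_pos_right 4 (by positivity)

theorem width_strictMono : StrictMono width := fun a b h => by
  have := eight_mul_width_le h
  have := four_le_width a
  omega

theorem two_dvd_width (t : ℕ) : 2 ∣ width t :=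
  Dvd.intro (2 * 8 ^ t) (by unfold width; ring)

theorem width_le_dim {N t : ℕ} (h : t ≤ N) : width t ≤ dim N := width_mono h

theorem jumpPos_self (N : ℕ) : jumpPos N N = 1 := by
  simp [jumpPos, dim]

theorem seed_pos (N : ℕ) : 0 < seed N := by
  unfold seed; positivity

theorem two_pow_lt_seed (N : ℕ) : 2 ^ (dim N + 2) < seed N := by
  have hd : 1 ≤ dim N := (four_le_width N).trans' (by norm_num)
  calc 2 ^ (dim N + 2) < (dim N + 1) * (4 * 2 ^ dim N + 1) + dim N := by
        rw [pow_add]; nlinarith [Nat.one_le_two_pow (n := dim N)]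
    _ ≤ seed N := Nat.le_self_pow (by omega) _

theorem weight_of_lt {N t : ℕ} (h : t < N) :
    weight N t = 4 * (width (t + 1)).choose (width t) * weight N (t + 1) := by
  rw [weight, weight, prod_eq_prod_Ico_succ_bot h]; ring

theorem seed_le_weight (N t : ℕ) : seed N ≤ weight N t :=
  Nat.le_mul_of_pos_right _ <| prod_pos fun l _ =>
    Nat.mul_pos (by norm_num) (Nat.choose_pos (width_mono l.le_succ))

theorem weight_pos (N t : ℕ) : 0 < weight N t := (seed_pos N).trans_le (seed_le_weight N t)

theorem weight_le_of_lt {N t : ℕ} (h : t < N) :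
    weight N t ≤ 4 * 2 ^ dim N * weight N (t + 1) := by
  rw [weight_of_lt h]
  gcongr
  exact (Nat.choose_le_two_pow _ _).trans (Nat.pow_le_pow_right (by norm_num) (width_le_dim h))


theorem bumps_add {N a b c : ℕ} (hab : a ≤ b) (hbc : b ≤ c) (j : ℕ) :
    bumps N a b j + bumps N b c j = bumps N a c j :=
  sum_Ioc_consecutive _ hab hbc

theorem bumps_succ_top {N a b : ℕ} (h : a ≤ b) (j : ℕ) :
    bumps N a (b + 1) j = bumps N a b j + weight N (b + 1) * (width (b + 1)).choose j :=
  sum_Ioc_succ_top h _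

theorem bumps_succ_bot {N a b : ℕ} (h : a < b) (j : ℕ) :
    bumps N a b j = weight N (a + 1) * (width (a + 1)).choose j + bumps N (a + 1) b j := by
  rw [← bumps_add a.le_succ h, bumps, Nat.Ioc_succ_singleton, sum_singleton]

theorem bumps_eq_zero {N a b j : ℕ} (h : width b < j) : bumps N a b j = 0 :=
  sum_eq_zero fun _ hl => by
    rw [Nat.choose_eq_zero_of_lt ((width_mono (mem_Ioc.1 hl).2).trans_lt h), mul_zero]

theorem bumps_width_self {N a b : ℕ} (h : a ≤ b) :
    bumps N a (b + 1) (width (b + 1)) = weight N (b + 1) := by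
  rw [bumps_succ_top h, bumps_eq_zero (width_strictMono b.lt_succ_self), Nat.choose_self, mul_one,
    zero_add]

theorem bumps_mono {N a b j j' : ℕ} (hj : j ≤ j') (h : 2 * j' ≤ width (a + 1)) :
    bumps N a b j ≤ bumps N a b j' :=
  sum_le_sum fun _ hl => Nat.mul_le_mul_left _
    (Nat.choose_le_choose_of_le_half hj (h.trans (width_mono (mem_Ioc.1 hl).1)))

theorem bumps_lt_bumps_succ {N a b j : ℕ} (hab : a < b) (h : 2 * (j + 1) ≤ width (a + 1)) :
    bumps N a b j < bumps N a b (j + 1) := by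
  rw [bumps_succ_bot hab, bumps_succ_bot hab]
  exact add_lt_add_of_lt_of_le
    (Nat.mul_lt_mul_of_pos_left (Nat.choose_lt_choose_succ h) (weight_pos N _))
    (bumps_mono j.le_succ (h.trans (width_mono (by omega))))

theorem two_mul_bumps_le_weight {N t : ℕ} (ht : t ≤ N) :
    2 * bumps N t N (width t) ≤ weight N t := by
  induction ht using Nat.decreasingInduction with
  | self => simp [bumps]
  | of_succ t ht ih =>
    have htail : bumps N (t + 1) N (width t) ≤ bumps N (t + 1) N (width (t + 1)) :=
      bumps_mono (width_mono t.le_succ) (by have := eight_mul_width_le (lt_add_one (t + 1)); omega)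
    have hC : 1 ≤ (width (t + 1)).choose (width t) := Nat.choose_pos (width_mono t.le_succ)
    rw [bumps_succ_bot ht, weight_of_lt ht]
    nlinarith

theorem bumps_valley {N t : ℕ} (ht : t < N) :
    bumps N t N (width t) + weight N t < bumps N t N (width t + 1) := by
  have key : 5 * (width (t + 1)).choose (width t) < (width (t + 1)).choose (width t + 1) := by
    rw [width_succ t]; exact Nat.five_mul_choose_lt_choose_succ (by have := four_le_width t; omega)
  have hrest : bumps N (t + 1) N (width t) ≤ bumps N (t + 1) N (width t + 1) :=
    bumps_mono (width t).le_succ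
      (by
        have := eight_mul_width_le (lt_add_one (t + 1))
        have := width_succ t
        have := four_le_width t
        omega)
  have := Nat.mul_lt_mul_of_pos_left key (weight_pos N (t + 1))
  rw [bumps_succ_bot ht, bumps_succ_bot ht, weight_of_lt ht]
  nlinarith

theorem fReversed_succ_dim_lt (N : ℕ) : fReversed N (dim N + 1) < fReversed N (dim N) := by
  have := four_le_width N
  rw [fReversed, fReversed, Nat.choose_self, bumps_eq_zero (dim N).lt_succ_self,
    Nat.choose_succ_self_right]
  unfold dim at *
  omega

theorem fReversed_succ_lt {N t j : ℕ} (ht : t ∈ Ioc 0 N) (hj : width t ≤ 2 * j)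
    (hjt : j < width t) : fReversed N (j + 1) < fReversed N j := by
  obtain ⟨ht0, htN⟩ := mem_Ioc.1 ht
  obtain ⟨s, rfl⟩ : ∃ s, t = s + 1 := ⟨t - 1, by omega⟩
  have hsplit : ∀ i, bumps N 0 N i =
      bumps N 0 s i + weight N (s + 1) * (width (s + 1)).choose i + bumps N (s + 1) N i :=
    fun i => by rw [← bumps_succ_top (Nat.zero_le s), bumps_add (by omega) htN]
  have hlow : ∀ i, j ≤ i → bumps N 0 s i = 0 := fun i hi =>
    bumps_eq_zero (by have := width_succ s; have := four_le_width s; omega)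
  have hhigh : 2 * bumps N (s + 1) N (j + 1) ≤ weight N (s + 1) :=
    (Nat.mul_le_mul_left 2 (bumps_mono hjt
      (by have := eight_mul_width_le (lt_add_one (s + 1)); omega))).trans
      (two_mul_bumps_le_weight htN)
  have hbump : weight N (s + 1) * (width (s + 1)).choose (j + 1) + weight N (s + 1) ≤
      weight N (s + 1) * (width (s + 1)).choose j := by
    rw [← Nat.mul_succ]
    exact Nat.mul_le_mul_left _ (Nat.choose_succ_lt_choose (by omega) hjt.le)
  have hbase : (dim N + 1).choose (j + 1) ≤ 2 ^ (dim N + 1) := Nat.choose_le_two_pow _ _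
  have hweight : 2 * 2 ^ (dim N + 1) < weight N (s + 1) := by
    have := (two_pow_lt_seed N).trans_le (seed_le_weight N (s + 1))
    rwa [pow_succ, mul_comm] at this
  rw [fReversed, fReversed, hsplit, hsplit, hlow j le_rfl, hlow (j + 1) j.le_succ]
  omega

theorem fReversed_lt_succ {N t j : ℕ} (ht : t < N) (hlow : 0 < t → width t ≤ j)
    (hhigh : 2 * (j + 1) ≤ width (t + 1)) : fReversed N j < fReversed N (j + 1) := by
  have hbase : (dim N + 1).choose j ≤ (dim N + 1).choose (j + 1) :=
    Nat.choose_le_choose_of_le_half j.le_succ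
      (by have := width_le_dim (show t + 1 ≤ N from ht); omega)
  have hrise := bumps_lt_bumps_succ (N := N) ht hhigh
  simp only [fReversed, ← bumps_add (Nat.zero_le t) ht.le]
  rcases Nat.eq_zero_or_pos t with rfl | htpos
  · have hempty : ∀ i, bumps N 0 0 i = 0 := fun i => by simp [bumps]
    rw [hempty, hempty]
    omega
  obtain ⟨s, rfl⟩ : ∃ s, t = s + 1 := ⟨t - 1, by omega⟩
  have hzero : bumps N 0 (s + 1) (j + 1) = 0 := bumps_eq_zero (by have := hlow htpos; omega)
  rcases (hlow htpos).lt_or_eq with hlt | rfl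
  · rw [bumps_eq_zero hlt, hzero]
    omega
  · have := bumps_valley (N := N) ht
    rw [bumps_width_self (Nat.zero_le s), hzero]
    omega

theorem hVector_zero (N : ℕ) : hVector N 0 = 1 := by
  rw [hVector, add_eq_left]
  refine sum_eq_zero fun t ht => if_neg ?_
  have := width_le_dim (mem_Ioc.1 ht).2
  unfold jumpPos
  omega

theorem weight_le_hVector {N t i : ℕ} (ht : t ∈ Ioc 0 N) (hs : jumpPos N t ≤ i) :
    weight N t ≤ hVector N i := by
  have := single_le_sum (f := fun t => if jumpPos N t ≤ i then weight N t else 0)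
    (fun _ _ => Nat.zero_le _) ht
  rw [if_pos hs] at this
  unfold hVector
  omega

theorem hVector_succ (N i : ℕ) : hVector N (i + 1) =
    hVector N i + ∑ t ∈ Ioc 0 N, if jumpPos N t = i + 1 then weight N t else 0 := by
  simp only [hVector, add_assoc, ← sum_add_distrib]
  congr 1
  refine sum_congr rfl fun t _ => ?_
  split_ifs <;> omega

theorem hVector_succ_le {N i : ℕ} (hi : 1 ≤ i) :
    hVector N (i + 1) ≤ hVector N i * (4 * 2 ^ dim N + 1) := by
  rw [hVector_succ]
  by_cases hjump : ∃ t ∈ Ioc 0 N, jumpPos N t = i + 1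
  · obtain ⟨t, ht, hts⟩ := hjump
    have hwidth := width_le_dim (mem_Ioc.1 ht).2
    have hsum :
        (∑ l ∈ Ioc 0 N, if jumpPos N l = i + 1 then weight N l else 0) = weight N t := by
      refine (sum_eq_single_of_mem t ht fun l hl hne => if_neg fun hl' => hne ?_).trans
        (if_pos hts)
      have := width_le_dim (mem_Ioc.1 hl).2
      unfold jumpPos at hl' hts
      exact width_strictMono.injective (by omega)
    have htN : t < N := by
      refine (mem_Ioc.1 ht).2.lt_of_ne fun h => ?_
      rw [h, jumpPos_self] at hts
      omega
    have hprev : weight N (t + 1) ≤ hVector N i := by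
      refine weight_le_hVector (mem_Ioc.2 ⟨by omega, htN⟩) ?_
      have := eight_mul_width_le (lt_add_one t)
      have := width_le_dim (show t + 1 ≤ N from htN)
      have := four_le_width t
      unfold jumpPos at hts ⊢
      omega
    have := weight_le_of_lt htN
    rw [hsum]
    nlinarith [Nat.mul_le_mul_left (4 * 2 ^ dim N) hprev]
  · rw [sum_eq_zero fun t ht => if_neg fun h => hjump ⟨t, ht, h⟩, add_zero]
    exact Nat.le_mul_of_pos_right _ (by positivity)

theorem hVector_succ_le_macaulayBound {N i : ℕ} (hN : 0 < N) (hi : 1 ≤ i)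
    (hid : i + 1 ≤ dim N) : hVector N (i + 1) ≤ macaulayBound i (hVector N i) := by
  obtain ⟨i, rfl⟩ : ∃ i', i = i' + 1 := ⟨i - 1, by omega⟩
  refine (hVector_succ_le hi).trans (mul_le_macaulayBound ?_)
  calc ((i + 2) * (4 * 2 ^ dim N + 1) + i) ^ (i + 1)
      ≤ ((dim N + 1) * (4 * 2 ^ dim N + 1) + dim N) ^ (i + 1) :=
        Nat.pow_le_pow_left (Nat.add_le_add (Nat.mul_le_mul_right _ (by omega)) (by omega)) _
    _ ≤ seed N := Nat.pow_le_pow_right (by positivity) (by omega)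
    _ ≤ weight N N := seed_le_weight N N
    _ ≤ hVector N (i + 1) :=
      weight_le_hVector (mem_Ioc.2 ⟨hN, le_rfl⟩) (by rw [jumpPos_self]; omega)

theorem fVector_eq {N k : ℕ} (hk : k ≤ dim N) : fVector N k = fReversed N (dim N + 1 - k) := by
  have hterm : ∀ i, (dim N - i).choose (k - i) * hVector N i = (dim N - i).choose (k - i) +
      ∑ t ∈ Ioc 0 N,
        weight N t * if jumpPos N t ≤ i then (dim N - i).choose (k - i) else 0 := by
    intro i
    rw [hVector, mul_add, mul_one, mul_sum]
    congr 1
    refine sum_congr rfl fun t _ => ?_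
    split_ifs <;> ring
  have hbase := sum_range_ite_choose_sub hk 0
  simp only [zero_le, if_true, Nat.sub_zero] at hbase
  simp only [fVector, hterm, sum_add_distrib]
  rw [sum_comm, hbase, fReversed, bumps]
  congr 1
  refine sum_congr rfl fun t ht => ?_
  rw [← mul_sum, sum_range_ite_choose_sub hk, jumpPos,
    show dim N + 1 - (dim N + 1 - width t) = width t by
      have := width_le_dim (mem_Ioc.1 ht).2; omega]

theorem fVector_lt_succ {N k : ℕ} (hk : k + 1 ≤ dim N) (hasc : InAscent N k) :
    fVector N k < fVector N (k + 1) := by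
  rw [fVector_eq (k := k) (by omega), fVector_eq hk, show dim N + 1 - k = dim N - k + 1 by omega,
    show dim N + 1 - (k + 1) = dim N - k by omega]
  rcases hasc with rfl | ⟨t, ht, hjump, hpeak⟩
  · simpa using fReversed_succ_dim_lt N
  · have := width_le_dim (mem_Ioc.1 ht).2
    have := two_dvd_width t
    unfold jumpPos peakPos at *
    exact fReversed_succ_lt ht (by omega) (by omega)

theorem fVector_succ_lt {N k : ℕ} (hN : 0 < N) (hk : k + 1 ≤ dim N) (hasc : ¬InAscent N k) :
    fVector N (k + 1) < fVector N k := by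
  simp only [InAscent, not_or, not_exists, not_and, not_lt] at hasc
  obtain ⟨hk0, hout⟩ := hasc
  rw [fVector_eq (k := k) (by omega), fVector_eq hk, show dim N + 1 - k = dim N - k + 1 by omega,
    show dim N + 1 - (k + 1) = dim N - k by omega]
  have hpeakN := hout N (mem_Ioc.2 ⟨hN, le_rfl⟩) (by rw [jumpPos_self]; omega)
  have hlast : 2 * (dim N - k + 1) ≤ width (N - 1 + 1) := by
    rw [Nat.sub_add_cancel hN]
    unfold peakPos at hpeakN
    unfold dim at *
    omega
  -- the least `t` whose row `t + 1` is still ascending at `dim N - k`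
  have hex : ∃ t, 2 * (dim N - k + 1) ≤ width (t + 1) := ⟨N - 1, hlast⟩
  have htN : Nat.find hex < N := (Nat.find_min' hex hlast).trans_lt (by omega)
  refine fReversed_lt_succ htN (fun ht0 => ?_) (Nat.find_spec hex)
  have hmin := Nat.find_min hex (show Nat.find hex - 1 < Nat.find hex by omega)
  rw [Nat.sub_add_cancel ht0] at hmin
  have hwidth := width_le_dim htN.le
  by_contra hlt
  have := hout _ (mem_Ioc.2 ⟨ht0, htN.le⟩) (by unfold jumpPos; omega)
  unfold peakPos at this
  omega

theorem not_inAscent_peakPos {N t : ℕ} (ht : t ∈ Ioc 0 N) : ¬InAscent N (peakPos N t) := by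
  have := four_le_width t
  have := width_le_dim (mem_Ioc.1 ht).2
  rintro (h0 | ⟨t', ht', hjump, hpeak⟩)
  · unfold peakPos at h0; omega
  have := width_le_dim (mem_Ioc.1 ht').2
  unfold jumpPos at hjump
  unfold peakPos at hjump hpeak
  rcases lt_trichotomy t' t with hlt | rfl | hgt
  · have := eight_mul_width_le hlt
    omega
  · omega
  · have := eight_mul_width_le hgt
    omega

theorem isPeak_fVector_iff {N j : ℕ} (hN : 0 < N) :
    IsPeak (dim N + 1) (fVector N) j ↔ ∃ t ∈ Ioc 0 N, peakPos N t = j := by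
  have hd : dim N = width N := rfl
  have hdim := four_le_width N
  have hascent_zero : InAscent N 0 := Or.inl rfl
  have hascent_one : InAscent N 1 := Or.inr ⟨N, mem_Ioc.2 ⟨hN, le_rfl⟩,
    by rw [jumpPos_self], by unfold peakPos; omega⟩
  rw [isPeak_iff_of_rise_fall (U := InAscent N) (fun _ hk => fVector_lt_succ (by omega))
    (fun _ hk => fVector_succ_lt hN (by omega))]
  constructor
  · rintro ⟨hj, hleft, hright⟩
    rcases hleft with hj0 | hj1 | ⟨t, ht, hjump, hpeak⟩
    · subst hj0
      exact absurd hright (by simp only [hascent_zero, not_true, or_false]; omega)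
    · rcases (show j = 0 ∨ j = 1 by omega) with rfl | rfl
      · exact absurd hright (by simp only [hascent_zero, not_true, or_false]; omega)
      · exact absurd hright (by simp only [hascent_one, not_true, or_false]; omega)
    · have := width_le_dim (mem_Ioc.1 ht).2
      unfold jumpPos at hjump
      unfold peakPos at hpeak
      rcases (show j ≤ peakPos N t by unfold peakPos; omega).lt_or_eq with hlt | heq
      · refine absurd hright (not_or.2 ⟨by unfold peakPos at hlt; omega, not_not.2 ?_⟩)
        exact Or.inr ⟨t, ht, by unfold jumpPos; omega, hlt⟩
      · exact ⟨t, ht, heq.symm⟩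
  · rintro ⟨t, ht, rfl⟩
    have := four_le_width t
    have := width_le_dim (mem_Ioc.1 ht).2
    refine ⟨by unfold peakPos; omega, Or.inr (Or.inr ⟨t, ht, ?_, ?_⟩),
      Or.inr (not_inAscent_peakPos ht)⟩
    · unfold jumpPos peakPos; omega
    · unfold peakPos; omega

theorem ncard_isPeak_fVector {N : ℕ} (hN : 0 < N) :
    {j | IsPeak (dim N + 1) (fVector N) j}.ncard = N := by
  have hset : {j | IsPeak (dim N + 1) (fVector N) j} = ((Ioc 0 N).image (peakPos N) : Set ℕ) := by
    ext j
    simp [isPeak_fVector_iff hN]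
  have hhalf : StrictMono fun t => width t / 2 := fun a b h => by
    show width a / 2 < width b / 2
    have := eight_mul_width_le h
    have := four_le_width a
    omega
  rw [hset, Set.ncard_coe_finset, card_image_of_injOn, Nat.card_Ioc, Nat.sub_zero]
  intro a ha b hb hab
  have := width_le_dim (mem_Ioc.1 ha).2
  have := width_le_dim (mem_Ioc.1 hb).2
  unfold peakPos at hab
  exact hhalf.injective (show width a / 2 = width b / 2 by omega)

end ManyPeaks

/-- For every integer `N ≥ 2` there exist an `e ≥ 1` and an O-sequence
`(h 0 = 1, h 1, …, h (e+1))` such that the sequence `(f₋₁ = 1, f₀, …, f_e)` defined by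
`f_{k-1} = ∑_{i=0}^{k} C(e+1-i, k-i) * h i` is nonunimodal with exactly `N` peaks. -/
theorem cm_fvector_arbitrarily_many_peaks (N : ℕ) (hN : 2 ≤ N) :
    ∃ (e : ℕ) (h : ℕ → ℕ), 1 ≤ e ∧ h 0 = 1 ∧
      (∀ i, 1 ≤ i → i ≤ e → h (i + 1) ≤ macaulayBound i (h i)) ∧
      {j | IsPeak (e + 2)
        (fun k => ∑ i ∈ Finset.range (k + 1), Nat.choose (e + 1 - i) (k - i) * h i) j}.ncard
        = N := by
  have hdim : 4 ≤ ManyPeaks.dim N := ManyPeaks.four_le_width N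
  refine ⟨ManyPeaks.dim N - 1, ManyPeaks.hVector N, by omega, ManyPeaks.hVector_zero N,
    fun i hi hie => ManyPeaks.hVector_succ_le_macaulayBound (by omega) hi (by omega), ?_⟩
  rw [show ManyPeaks.dim N - 1 + 1 = ManyPeaks.dim N by omega,
    show ManyPeaks.dim N - 1 + 2 = ManyPeaks.dim N + 1 by omega]
  exact ManyPeaks.ncard_isPeak_fVector (by omega)
end

section
/- For an integer r ≥ 3, the sequence (1, r, C(r,2), C(r,2)/3) is a pure f-vector if and only if r is congruent to 1 or 3 modulo 6. -/
/-!
If a nonempty family of triples has f-vector `(r, C(r,2), C(r,2)/3)`, its `C(r,2)/3` triples,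
each containing three pairs, cover all `C(r,2)` pairs of the `r` covered points; so every pair
lies in exactly one triple. The triples through a point then partition the other `r - 1` points
into pairs, so `r = 2d + 1`, and `3 ∣ C(r,2) = r d` forces `r ≡ 1, 3 (mod 6)`.

Conversely, any family of at most `C(r,2)/3` triples covering all pairs of `r` points has this
f-vector. Such families live on `G × ℤ/3` for an abelian group `G` with a bijection `φ`: a pair
`{x, y}` on level `i` is completed by `(φ (x + y), i + 1)`, which covers every pair except the
diagonal ones `(x, i), (φ (x + x), i + 1)`. Bose (`r = 3m`, `m` odd): `φ` halves in `ℤ/m`, and the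
diagonal pairs lie in the vertical triples `{x} × ℤ/3`. Skolem (`r = 6n + 1`): in `ℤ/2n`, `φ` is
inverse to the map doubling `[0, n)` and sending `n + j` to `2j + 1`, so `φ (x + x)` is `x` on
`[0, n)` and `x - n` on `[n, 2n)`; vertical triples over `[0, n)` and the triples
`{∞, (x + n, k), (x, k + 1)}` cover the remaining diagonal pairs and all pairs through `∞`.
-/

open Finset

lemma Finset.pairwiseDisjoint_of_sum_card_le_card_biUnion {ι β : Type*} [DecidableEq ι]
    [DecidableEq β] {s : Finset ι} {t : ι → Finset β}
    (h : ∑ i ∈ s, (t i).card ≤ (s.biUnion t).card) : (s : Set ι).PairwiseDisjoint t := by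
  intro i hi j hj hij
  by_contra hij'
  obtain ⟨x, hxi, hxj⟩ := not_disjoint_iff.mp hij'
  have hx : x ∈ t i ∩ (s.erase i).biUnion t :=
    mem_inter.mpr ⟨hxi, mem_biUnion.mpr ⟨j, mem_erase.mpr ⟨Ne.symm hij, hj⟩, hxj⟩⟩
  have hunion := card_union_add_card_inter (t i) ((s.erase i).biUnion t)
  rw [← biUnion_insert, insert_erase hi] at hunion
  have hrest : ((s.erase i).biUnion t).card ≤ ∑ k ∈ s.erase i, (t k).card := card_biUnion_le
  rw [← add_sum_erase s _ hi] at h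
  have := card_pos.mpr ⟨x, hx⟩
  omega

section Faces

variable {α : Type*} [DecidableEq α]

def faces (F : Finset (Finset α)) (k : ℕ) : Finset (Finset α) :=
  F.biUnion (powersetCard k)

lemma mem_faces {F : Finset (Finset α)} {k : ℕ} {T : Finset α} :
    T ∈ faces F k ↔ T.card = k ∧ ∃ S ∈ F, T ⊆ S := by
  simp only [faces, mem_biUnion, mem_powersetCard]
  grind

lemma faces_eq_self {F : Finset (Finset α)} {k : ℕ} (hF : ∀ S ∈ F, S.card = k) :
    faces F k = F := by
  ext T
  rw [mem_faces]
  refine ⟨fun ⟨hT, S, hS, hTS⟩ => ?_, fun hT => ⟨hF T hT, T, hT, subset_rfl⟩⟩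
  rwa [eq_of_subset_of_card_le hTS (by rw [hT, hF S hS])]

lemma faces_subset_powersetCard_sup (F : Finset (Finset α)) (k : ℕ) :
    faces F k ⊆ (F.sup id).powersetCard k := by
  intro T hT
  obtain ⟨hT, S, hS, hTS⟩ := mem_faces.mp hT
  exact mem_powersetCard.mpr ⟨hTS.trans (le_sup (f := id) hS), hT⟩

lemma faces_one (F : Finset (Finset α)) : faces F 1 = (F.sup id).powersetCard 1 := by
  refine (faces_subset_powersetCard_sup F 1).antisymm fun T hT => ?_
  obtain ⟨hTW, hT⟩ := mem_powersetCard.mp hT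
  obtain ⟨x, rfl⟩ := card_eq_one.mp hT
  obtain ⟨S, hS, hxS⟩ := mem_sup.mp (hTW (mem_singleton_self x))
  exact mem_faces.mpr ⟨hT, S, hS, singleton_subset_iff.mpr hxS⟩

lemma card_faces_le {F : Finset (Finset α)} {k : ℕ} (hF : ∀ S ∈ F, S.card = k) (j : ℕ) :
    (faces F j).card ≤ k.choose j * F.card := by
  rw [mul_comm]
  exact card_biUnion_le_card_mul _ _ _ fun S hS => by rw [card_powersetCard, hF S hS]

lemma filter_powersetCard_eq_faces {V : Finset α} {F : Finset (Finset α)}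
    (hV : ∀ S ∈ F, S ⊆ V) (k : ℕ) :
    (V.powersetCard k).filter (fun T => ∃ S ∈ F, T ⊆ S) = faces F k := by
  ext T
  simp only [mem_filter, mem_powersetCard, mem_faces]
  grind

lemma faces_map {β : Type*} [DecidableEq β] (ι : α ↪ β) (F : Finset (Finset α)) (k : ℕ) :
    faces (F.map (mapEmbedding ι).toEmbedding) k =
      (faces F k).map (mapEmbedding ι).toEmbedding := by
  ext T
  simp only [mem_map, mem_faces, mapEmbedding_apply, RelEmbedding.coe_toEmbedding]
  constructor
  · rintro ⟨hT, _, ⟨S, hS, rfl⟩, hTS⟩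
    obtain ⟨T₀, hT₀S, rfl⟩ := subset_map_iff.mp hTS
    exact ⟨T₀, ⟨by rwa [card_map] at hT, S, hS, hT₀S⟩, rfl⟩
  · rintro ⟨T₀, ⟨hT₀, S, hS, hT₀S⟩, rfl⟩
    exact ⟨by rwa [card_map], S.map ι, ⟨S, hS, rfl⟩, map_subset_map.mpr hT₀S⟩

end Faces

lemma isPureFVector_iff_exists_faces {e : ℕ} {f : ℕ → ℕ} :
    IsPureFVector e f ↔ ∃ F : Finset (Finset ℕ), F.Nonempty ∧ (∀ S ∈ F, S.card = e + 1) ∧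
      ∀ i ≤ e, f i = (faces F (i + 1)).card := by
  constructor
  · rintro ⟨V, F, hne, hF, hf⟩
    refine ⟨F, hne, fun S hS => (hF S hS).2, fun i hi => ?_⟩
    rw [hf i hi, filter_powersetCard_eq_faces fun S hS => (hF S hS).1]
  · rintro ⟨F, hne, hF, hf⟩
    refine ⟨F.sup id, F, hne, fun S hS => ⟨le_sup (f := id) hS, hF S hS⟩, fun i hi => ?_⟩
    rw [hf i hi, filter_powersetCard_eq_faces fun S hS => le_sup (f := id) hS]

lemma isPureFVector_of_faces {α : Type*} [DecidableEq α] [Countable α] {e : ℕ} {f : ℕ → ℕ}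
    (F : Finset (Finset α)) (hne : F.Nonempty) (hF : ∀ S ∈ F, S.card = e + 1)
    (hf : ∀ i ≤ e, f i = (faces F (i + 1)).card) : IsPureFVector e f := by
  obtain ⟨ι, hι⟩ := Countable.exists_injective_nat α
  let ιF := (mapEmbedding ⟨ι, hι⟩).toEmbedding
  refine isPureFVector_iff_exists_faces.mpr ⟨F.map ιF, hne.map, fun S hS => ?_, fun i hi => ?_⟩
  · obtain ⟨S₀, hS₀, rfl⟩ := mem_map.mp hS
    simpa [ιF] using hF S₀ hS₀
  · rw [faces_map, card_map, hf i hi]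

def steinerFVector (r : ℕ) : ℕ → ℕ :=
  fun i => if i = 0 then r else if i = 1 then r.choose 2 else r.choose 2 / 3

lemma isPureFVector_steinerFVector_of_covering {α : Type*} [Fintype α] [DecidableEq α]
    (F : Finset (Finset α)) (hF : ∀ S ∈ F, S.card = 3)
    (hcover : ∀ x y : α, x ≠ y → ∃ S ∈ F, x ∈ S ∧ y ∈ S)
    (hsize : 3 * F.card ≤ (Fintype.card α).choose 2) (hα : 2 ≤ Fintype.card α) :
    IsPureFVector 2 (steinerFVector (Fintype.card α)) := by
  have hpairs : faces F 2 = univ.powersetCard 2 := by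
    ext T
    rw [mem_faces, mem_powersetCard_univ]
    refine ⟨And.left, fun hT => ⟨hT, ?_⟩⟩
    obtain ⟨x, y, hxy, rfl⟩ := card_eq_two.mp hT
    obtain ⟨S, hS, hx, hy⟩ := hcover x y hxy
    exact ⟨S, hS, insert_subset hx (singleton_subset_iff.mpr hy)⟩
  have hpoints : F.sup id = univ := by
    refine eq_univ_of_forall fun x => ?_
    obtain ⟨y, hyx⟩ := Fintype.exists_ne_of_one_lt_card hα x
    obtain ⟨S, hS, hx, -⟩ := hcover x y hyx.symm
    exact mem_sup.mpr ⟨S, hS, hx⟩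
  obtain ⟨x, y, hxy⟩ := Fintype.exists_pair_of_one_lt_card hα
  obtain ⟨S, hS, -⟩ := hcover x y hxy
  have hlower : (Fintype.card α).choose 2 ≤ 3 * F.card := by
    simpa [hpairs] using card_faces_le hF 2
  refine isPureFVector_of_faces F ⟨S, hS⟩ hF fun i hi => ?_
  interval_cases i
  · simp [steinerFVector, faces_one, hpoints]
  · simp [steinerFVector, hpairs]
  · simp only [steinerFVector, faces_eq_self hF, OfNat.ofNat_ne_zero, OfNat.ofNat_ne_one, if_false]
    omega

lemma two_mul_card_filter_mem_add_one {α : Type*} [DecidableEq α] {F : Finset (Finset α)}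
    (hF : ∀ S ∈ F, S.card = 3) (hlin : (F : Set (Finset α)).PairwiseDisjoint (powersetCard 2))
    (hcover : faces F 2 = (F.sup id).powersetCard 2) {v : α} (hv : v ∈ F.sup id) :
    2 * (F.filter (v ∈ ·)).card + 1 = (F.sup id).card := by
  have hlink : (F.sup id).erase v = (F.filter (v ∈ ·)).biUnion (·.erase v) := by
    ext w
    simp only [mem_erase, mem_biUnion, mem_filter]
    constructor
    · rintro ⟨hwv, hw⟩
      have hvw : {v, w} ∈ faces F 2 := by
        rw [hcover, mem_powersetCard]
        exact ⟨insert_subset hv (singleton_subset_iff.mpr hw), card_pair (Ne.symm hwv)⟩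
      obtain ⟨-, S, hS, hvwS⟩ := mem_faces.mp hvw
      exact ⟨S, ⟨hS, hvwS (mem_insert_self v _)⟩, hwv, hvwS (by simp)⟩
    · rintro ⟨S, ⟨hS, -⟩, hwv, hwS⟩
      exact ⟨hwv, mem_sup.mpr ⟨S, hS, hwS⟩⟩
  have hdisj : ((F.filter (v ∈ ·)) : Set (Finset α)).PairwiseDisjoint (·.erase v) := by
    intro S hS S' hS' hSS'
    simp only [coe_filter, Set.mem_ofPred_eq] at hS hS'
    refine disjoint_left.mpr fun w hw hw' => ?_
    have hpair : ∀ S' : Finset α, v ∈ S' → w ∈ S'.erase v → {v, w} ∈ S'.powersetCard 2 :=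
      fun S' hv hw => mem_powersetCard.mpr
        ⟨insert_subset hv (singleton_subset_iff.mpr (mem_of_mem_erase hw)),
          card_pair (ne_of_mem_erase hw).symm⟩
    exact disjoint_left.mp (hlin hS.1 hS'.1 hSS') (hpair S hS.2 hw) (hpair S' hS'.2 hw')
  have hcard := card_erase_of_mem hv
  rw [hlink, card_biUnion hdisj, sum_congr rfl fun S hS => by
    rw [card_erase_of_mem (mem_filter.mp hS).2, hF S (mem_filter.mp hS).1]] at hcard
  have := card_pos.mpr ⟨v, hv⟩
  simp only [sum_const, smul_eq_mul] at hcard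
  omega

lemma mod_six_of_isPureFVector_steinerFVector {r : ℕ} (h : IsPureFVector 2 (steinerFVector r)) :
    r % 6 = 1 ∨ r % 6 = 3 := by
  obtain ⟨F, ⟨S₀, hS₀⟩, hF, hf⟩ := isPureFVector_iff_exists_faces.mp h
  have hpoints : r = (F.sup id).card := by
    simpa [steinerFVector, faces_one] using hf 0 (by norm_num)
  have hpairs : r.choose 2 = (faces F 2).card := by
    simpa [steinerFVector] using hf 1 (by norm_num)
  have hblocks : r.choose 2 / 3 = F.card := by
    simpa [steinerFVector, faces_eq_self hF] using hf 2 le_rfl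
  have hcover : faces F 2 = (F.sup id).powersetCard 2 :=
    eq_of_subset_of_card_le (faces_subset_powersetCard_sup F 2)
      (by rw [card_powersetCard, ← hpoints, ← hpairs])
  have hupper : (faces F 2).card ≤ 3 * F.card := card_faces_le hF 2
  have hlin : (F : Set (Finset ℕ)).PairwiseDisjoint (powersetCard 2) := by
    refine pairwiseDisjoint_of_sum_card_le_card_biUnion ?_
    rw [sum_congr rfl fun S hS => by rw [card_powersetCard, hF S hS], sum_const, smul_eq_mul]
    change F.card * 3 ≤ (faces F 2).card
    omega
  obtain ⟨v, hv⟩ : (F.sup id).Nonempty :=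
    (card_pos.mp (by rw [hF S₀ hS₀]; norm_num) : S₀.Nonempty).mono (le_sup (f := id) hS₀)
  have hdeg := two_mul_card_filter_mem_add_one hF hlin hcover hv
  obtain rfl : r = 2 * (F.filter (v ∈ ·)).card + 1 := by omega
  set d := (F.filter (v ∈ ·)).card
  have hchoose : (2 * d + 1).choose 2 = (2 * d + 1) * d := by
    rw [Nat.choose_two_right, Nat.add_sub_cancel, mul_left_comm, Nat.mul_div_cancel_left _ two_pos]
  have h3 : 3 ∣ (2 * d + 1) * d := by
    rw [← hchoose]
    omega
  rcases (Nat.prime_three.dvd_mul).mp h3 with h3 | h3 <;> omega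

lemma ZMod.three_eq_or_eq_add_one_or_add_one_eq (i j : ZMod 3) :
    j = i ∨ j = i + 1 ∨ i = j + 1 := by
  revert i j; decide

section PairBlock

variable {G : Type*} [AddCommGroup G] [DecidableEq G]

def pairBlock (φ : G ≃ G) (T : Finset G) (i : ZMod 3) : Finset (G × ZMod 3) :=
  insert (φ (∑ x ∈ T, x), i + 1) (T ×ˢ {i})

lemma card_pairBlock (φ : G ≃ G) {T : Finset G} (hT : T.card = 2) (i : ZMod 3) :
    (pairBlock φ T i).card = 3 := by
  rw [pairBlock, card_insert_of_notMem, card_product, hT, card_singleton]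
  simp

lemma mem_pairBlock_pair (φ : G ≃ G) (x y : G) (i : ZMod 3) :
    (x, i) ∈ pairBlock φ {x, y} i ∧ (y, i) ∈ pairBlock φ {x, y} i := by
  simp [pairBlock]

lemma exists_pairBlock_of_ne (φ : G ≃ G) {x y : G} (hy : y ≠ φ (x + x)) (i : ZMod 3) :
    ∃ T : Finset G, T.card = 2 ∧ (x, i) ∈ pairBlock φ T i ∧ (y, i + 1) ∈ pairBlock φ T i := by
  have hx : x ≠ φ.symm y - x := fun h => hy (by rw [eq_sub_iff_add_eq.mp h, φ.apply_symm_apply])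
  refine ⟨{x, φ.symm y - x}, card_pair hx, by simp [pairBlock], ?_⟩
  simp [pairBlock, sum_pair hx]

lemma exists_mem_of_pairBlock_mem {α : Type*} (φ : G ≃ G) (e : G × ZMod 3 ↪ α)
    {F : Finset (Finset α)} (hpair : ∀ T : Finset G, T.card = 2 → ∀ i, (pairBlock φ T i).map e ∈ F)
    (hdiag : ∀ x i, ∃ S ∈ F, e (x, i) ∈ S ∧ e (φ (x + x), i + 1) ∈ S)
    {p q : G × ZMod 3} (hpq : p ≠ q) : ∃ S ∈ F, e p ∈ S ∧ e q ∈ S := by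
  have hcross : ∀ x y i, ∃ S ∈ F, e (x, i) ∈ S ∧ e (y, i + 1) ∈ S := by
    intro x y i
    by_cases hy : y = φ (x + x)
    · rw [hy]
      exact hdiag x i
    · obtain ⟨T, hT, hx, hy⟩ := exists_pairBlock_of_ne φ hy i
      exact ⟨_, hpair T hT i, mem_map_of_mem e hx, mem_map_of_mem e hy⟩
  obtain ⟨x, i⟩ := p
  obtain ⟨y, j⟩ := q
  rcases ZMod.three_eq_or_eq_add_one_or_add_one_eq i j with rfl | rfl | rfl
  · have hxy : x ≠ y := fun h => hpq (by rw [h])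
    obtain ⟨hx, hy⟩ := mem_pairBlock_pair φ x y j
    exact ⟨_, hpair {x, y} (card_pair hxy) j, mem_map_of_mem e hx, mem_map_of_mem e hy⟩
  · exact hcross x y i
  · obtain ⟨S, hS, hy, hx⟩ := hcross y x j
    exact ⟨S, hS, hx, hy⟩

end PairBlock

lemma Nat.three_mul_choose_two (g : ℕ) : (3 * g).choose 2 = 9 * g.choose 2 + 3 * g := by
  apply Nat.cast_injective (R := ℚ)
  push_cast [Nat.cast_choose_two]
  ring

section Bose

variable {G : Type*} [AddCommGroup G] [Fintype G] [DecidableEq G]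

def boseFamily (φ : G ≃ G) : Finset (Finset (G × ZMod 3)) :=
  ((univ.powersetCard 2 ×ˢ univ).image fun Ti : Finset G × ZMod 3 => pairBlock φ Ti.1 Ti.2) ∪
    univ.image fun x : G => {x} ×ˢ univ

lemma pairBlock_mem_boseFamily (φ : G ≃ G) {T : Finset G} (hT : T.card = 2) (i : ZMod 3) :
    pairBlock φ T i ∈ boseFamily φ :=
  mem_union_left _ (mem_image.mpr ⟨(T, i), by simp [hT], rfl⟩)

lemma isPureFVector_bose (φ : G ≃ G) (hφ : ∀ x, φ (x + x) = x) :
    IsPureFVector 2 (steinerFVector (3 * Fintype.card G)) := by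
  have hcard : Fintype.card (G × ZMod 3) = 3 * Fintype.card G := by
    rw [Fintype.card_prod, ZMod.card, mul_comm]
  rw [← hcard]
  refine isPureFVector_steinerFVector_of_covering (boseFamily φ) ?_ ?_ ?_ ?_
  · intro S hS
    simp only [boseFamily, mem_union, mem_image, mem_product, mem_powersetCard_univ] at hS
    rcases hS with ⟨⟨T, i⟩, ⟨hT, -⟩, rfl⟩ | ⟨x, -, rfl⟩
    · exact card_pairBlock φ hT i
    · simp
  · intro p q hpq
    refine exists_mem_of_pairBlock_mem φ (Function.Embedding.refl _) (fun T hT i => ?_)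
      (fun x i => ?_) hpq
    · rw [map_refl]
      exact pairBlock_mem_boseFamily φ hT i
    · exact ⟨{x} ×ˢ univ, mem_union_right _ (mem_image.mpr ⟨x, mem_univ x, rfl⟩), by simp [hφ]⟩
  · rw [hcard, Nat.three_mul_choose_two]
    calc 3 * (boseFamily φ).card
        ≤ 3 * ((Fintype.card G).choose 2 * 3 + Fintype.card G) := by
          gcongr
          refine (card_union_le _ _).trans (add_le_add (card_image_le.trans ?_) card_image_le)
          simp
      _ = 9 * (Fintype.card G).choose 2 + 3 * Fintype.card G := by ring
  · have := Fintype.card_pos (α := G)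
    omega

end Bose

lemma ZMod.exists_add_self_eq {m : ℕ} (hm : Odd m) :
    ∃ φ : ZMod m ≃ ZMod m, ∀ x, φ (x + x) = x :=
  ⟨(Units.mulLeft (ZMod.unitOfCoprime 2 (Nat.coprime_two_left.mpr hm))).symm, fun x => by
    rw [Equiv.symm_apply_eq, Units.mulLeft_apply, ZMod.coe_unitOfCoprime]
    push_cast
    ring⟩

lemma Nat.six_mul_add_one_choose_two (n : ℕ) :
    (6 * n + 1).choose 2 = 9 * (2 * n).choose 2 + 12 * n := by
  apply Nat.cast_injective (R := ℚ)
  push_cast [Nat.cast_choose_two]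
  ring

section Skolem

variable {n : ℕ} [NeZero n]

lemma exists_lt_eq_natCast_add {x : ZMod (2 * n)} (hx : n ≤ x.val) :
    ∃ j < n, x = (j : ZMod (2 * n)) + n :=
  ⟨x.val - n, by have := ZMod.val_lt x; omega, by
    rw [Nat.cast_sub hx, sub_add_cancel, ZMod.natCast_zmod_val]⟩

variable (n)

def skolemDouble (y : ZMod (2 * n)) : ZMod (2 * n) :=
  ((if y.val < n then 2 * y.val else 2 * (y.val - n) + 1 : ℕ) : ZMod (2 * n))

lemma skolemDouble_injective : Function.Injective (skolemDouble n) := by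
  intro y y' h
  have hval := congrArg ZMod.val h
  have := ZMod.val_lt y
  have := ZMod.val_lt y'
  simp only [skolemDouble] at hval
  rw [ZMod.val_natCast_of_lt (by split_ifs <;> omega),
    ZMod.val_natCast_of_lt (by split_ifs <;> omega)] at hval
  exact ZMod.val_injective _ (by split_ifs at hval <;> omega)

noncomputable def skolemHalf : ZMod (2 * n) ≃ ZMod (2 * n) :=
  (Equiv.ofBijective _ (skolemDouble_injective n).bijective_of_finite).symm

lemma skolemHalf_add_self (x : ZMod (2 * n)) :
    skolemHalf n (x + x) = if x.val < n then x else x - n := by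
  rw [skolemHalf, Equiv.symm_apply_eq, Equiv.ofBijective_apply]
  split_ifs with hx
  · simp [skolemDouble, hx, two_mul]
  · obtain ⟨j, hj, rfl⟩ := exists_lt_eq_natCast_add (not_lt.mp hx)
    have h2n : ((2 * n : ℕ) : ZMod (2 * n)) = 0 := ZMod.natCast_self _
    push_cast at h2n
    simp [skolemDouble, ZMod.val_natCast_of_lt (by omega : j < 2 * n), hj]
    linear_combination h2n

-- `none` is the point `∞`.
abbrev SkolemPoint := Option (ZMod (2 * n) × ZMod 3)

def skolemInfBlock (x : ZMod (2 * n)) (k : ZMod 3) : Finset (SkolemPoint n) :=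
  {none, some (x + n, k), some (x, k + 1)}

def skolemFamily (φ : ZMod (2 * n) ≃ ZMod (2 * n)) : Finset (Finset (SkolemPoint n)) :=
  ((univ.powersetCard 2 ×ˢ univ).image fun Ti : Finset (ZMod (2 * n)) × ZMod 3 =>
      (pairBlock φ Ti.1 Ti.2).map Function.Embedding.some) ∪
    (range n).image (fun j : ℕ => ({(j : ZMod (2 * n))} ×ˢ univ).map Function.Embedding.some) ∪
    (range n ×ˢ univ).image fun jk : ℕ × ZMod 3 => skolemInfBlock n jk.1 jk.2

variable {n}

lemma vertical_mem_skolemFamily (φ : ZMod (2 * n) ≃ ZMod (2 * n)) {j : ℕ} (hj : j < n) :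
    ({(j : ZMod (2 * n))} ×ˢ univ).map Function.Embedding.some ∈ skolemFamily n φ :=
  mem_union_left _ (mem_union_right _ (mem_image.mpr ⟨j, mem_range.mpr hj, rfl⟩))

lemma infBlock_mem_skolemFamily (φ : ZMod (2 * n) ≃ ZMod (2 * n)) {j : ℕ} (hj : j < n)
    (k : ZMod 3) :
    skolemInfBlock n j k ∈ skolemFamily n φ :=
  mem_union_right _ (mem_image.mpr ⟨(j, k), by simp [hj], rfl⟩)

lemma exists_skolemFamily_none (φ : ZMod (2 * n) ≃ ZMod (2 * n)) (z : ZMod (2 * n))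
    (k : ZMod 3) : ∃ S ∈ skolemFamily n φ, none ∈ S ∧ some (z, k) ∈ S := by
  by_cases hz : z.val < n
  · refine ⟨_, infBlock_mem_skolemFamily φ hz (k - 1), by simp [skolemInfBlock], ?_⟩
    simp [skolemInfBlock]
  · obtain ⟨j, hj, rfl⟩ := exists_lt_eq_natCast_add (not_lt.mp hz)
    exact ⟨_, infBlock_mem_skolemFamily φ hj k, by simp [skolemInfBlock]⟩

lemma exists_skolemFamily_diagonal (φ : ZMod (2 * n) ≃ ZMod (2 * n))
    (hφ : ∀ x : ZMod (2 * n), φ (x + x) = if x.val < n then x else x - n)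
    (x : ZMod (2 * n)) (i : ZMod 3) :
    ∃ S ∈ skolemFamily n φ, some (x, i) ∈ S ∧ some (φ (x + x), i + 1) ∈ S := by
  rw [hφ]
  by_cases hx : x.val < n
  · refine ⟨_, vertical_mem_skolemFamily φ hx, ?_⟩
    simp [hx]
  · rw [if_neg hx]
    obtain ⟨j, hj, rfl⟩ := exists_lt_eq_natCast_add (not_lt.mp hx)
    exact ⟨_, infBlock_mem_skolemFamily φ hj i, by simp [skolemInfBlock]⟩

lemma isPureFVector_skolem (φ : ZMod (2 * n) ≃ ZMod (2 * n))
    (hφ : ∀ x : ZMod (2 * n), φ (x + x) = if x.val < n then x else x - n) :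
    IsPureFVector 2 (steinerFVector (6 * n + 1)) := by
  have hcard : Fintype.card (SkolemPoint n) = 6 * n + 1 := by
    rw [Fintype.card_option, Fintype.card_prod, ZMod.card, ZMod.card]
    ring
  rw [← hcard]
  refine isPureFVector_steinerFVector_of_covering (skolemFamily n φ) ?_ ?_ ?_ ?_
  · intro S hS
    simp only [skolemFamily, mem_union, mem_image, mem_product, mem_powersetCard_univ] at hS
    rcases hS with (⟨⟨T, i⟩, ⟨hT, -⟩, rfl⟩ | ⟨j, -, rfl⟩) | ⟨⟨j, k⟩, -, rfl⟩
    · rw [card_map, card_pairBlock φ hT i]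
    · simp
    · rw [card_eq_three]
      refine ⟨_, _, _, by simp, by simp, ?_, rfl⟩
      simp
  · rintro (_ | p) (_ | q) hpq
    · exact absurd rfl hpq
    · exact exists_skolemFamily_none φ q.1 q.2
    · obtain ⟨S, hS, hq, hp⟩ := exists_skolemFamily_none φ p.1 p.2
      exact ⟨S, hS, hp, hq⟩
    · refine exists_mem_of_pairBlock_mem φ Function.Embedding.some (fun T hT i => ?_)
        (exists_skolemFamily_diagonal φ hφ) (hpq <| congrArg some ·)
      exact mem_union_left _ (mem_union_left _ (mem_image.mpr ⟨(T, i), by simp [hT], rfl⟩))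
  · rw [hcard, Nat.six_mul_add_one_choose_two]
    calc 3 * (skolemFamily n φ).card
        ≤ 3 * ((2 * n).choose 2 * 3 + n + n * 3) := by
          gcongr
          refine (card_union_le _ _).trans (add_le_add ((card_union_le _ _).trans
            (add_le_add (card_image_le.trans ?_) (card_image_le.trans ?_)))
            (card_image_le.trans ?_)) <;> simp
      _ = 9 * (2 * n).choose 2 + 12 * n := by ring
  · have := NeZero.pos n
    omega

end Skolem

/-- For an integer `r ≥ 3`, the sequence `(1, r, C(r,2), C(r,2)/3)` is a pure f-vector
if and only if `r ≡ 1` or `3 (mod 6)` (Kirkman's theorem on Steiner triple systems). -/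
theorem pure_fvector_steiner_iff (r : ℕ) (hr : 3 ≤ r) :
    IsPureFVector 2
        (fun i => if i = 0 then r else if i = 1 then r.choose 2 else r.choose 2 / 3) ↔
      (r % 6 = 1 ∨ r % 6 = 3) := by
  refine ⟨mod_six_of_isPureFVector_steinerFVector, ?_⟩
  rintro (h | h)
  · obtain ⟨n, rfl⟩ : ∃ n, r = 6 * n + 1 := ⟨r / 6, by omega⟩
    have : NeZero n := ⟨by omega⟩
    exact isPureFVector_skolem (skolemHalf n) (skolemHalf_add_self n)
  · obtain ⟨m, rfl⟩ : ∃ m, r = 3 * m := ⟨r / 3, by omega⟩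
    have : NeZero m := ⟨by omega⟩
    obtain ⟨φ, hφ⟩ := ZMod.exists_add_self_eq (m := m) (Nat.odd_iff.mpr (by omega))
    have := isPureFVector_bose φ hφ
    rwa [ZMod.card] at this
end

section
/- Let r ≥ 7 be an integer congruent to 1 or 3 modulo 6. Then the sequence (1, r, C(r,2) - 1, C(r,2)/3) is not a pure f-vector; that is, there is no family of C(r,2)/3 distinct 3-element subsets of an r-element set V such that every element of V lies in some member of the family and exactly C(r,2) - 1 of the 2-element subsets of V are contained in at least one member of the family. -/
/-- Double counting containments between two families of finsets. -/
lemma my_double_count (X G : Finset (Finset ℕ)) :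
    ∑ T ∈ X, (G.filter (fun S => T ⊆ S)).card
      = ∑ S ∈ G, (X.filter (fun T => T ⊆ S)).card := by
  simp only [Finset.card_filter]
  exact Finset.sum_comm

/-- Pairs through a fixed vertex. -/
lemma my_pairs_through (X : Finset ℕ) (a : ℕ) (ha : a ∈ X) :
    ((X.powersetCard 2).filter (fun T => a ∈ T)).card = X.card - 1 := by
  have himg : (X.powersetCard 2).filter (fun T => a ∈ T)
      = (X.erase a).image (fun x => ({a, x} : Finset ℕ)) := by
    ext T
    simp only [Finset.mem_filter, Finset.mem_powersetCard, Finset.mem_image,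
      Finset.mem_erase]
    constructor
    · rintro ⟨⟨hTX, hc⟩, haT⟩
      obtain ⟨u, v, huv, rfl⟩ := Finset.card_eq_two.mp hc
      rcases Finset.mem_insert.mp haT with rfl | hv
      · exact ⟨v, ⟨Ne.symm huv, hTX (by simp)⟩, rfl⟩
      · have : a = v := by simpa using hv
        subst this
        exact ⟨u, ⟨huv, hTX (by simp)⟩, by rw [Finset.pair_comm]⟩
    · rintro ⟨x, ⟨hxa, hxX⟩, rfl⟩
      refine ⟨⟨?_, ?_⟩, by simp⟩
      · intro y hy
        rcases Finset.mem_insert.mp hy with rfl | hy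
        · exact ha
        · simpa using (Finset.mem_singleton.mp hy) ▸ hxX
      · exact Finset.card_pair (Ne.symm hxa)
  rw [himg, Finset.card_image_of_injOn, Finset.card_erase_of_mem ha]
  intro x hx y hy hxy
  have hxa : x ≠ a := (Finset.mem_erase.mp hx).1
  simp only [] at hxy
  have : x ∈ ({a, y} : Finset ℕ) := by rw [← hxy]; simp
  rcases Finset.mem_insert.mp this with rfl | h
  · exact absurd rfl hxa
  · simpa using h

/-- For `r ≥ 7` congruent to 1 or 3 mod 6, the sequence `(1, r, C(r,2) - 1, C(r,2)/3)`
is not a pure f-vector. -/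
theorem not_pure_fvector_one_pair_missing (r : ℕ) (hr : 7 ≤ r)
    (hmod : r % 6 = 1 ∨ r % 6 = 3) :
    ¬ IsPureFVector 2
        (fun i => if i = 0 then r else if i = 1 then r.choose 2 - 1
          else r.choose 2 / 3) := by
  rintro ⟨V, F, hFne, hmem, hf⟩
  -- basic facts about r.choose 2
  have hc2pos : 1 ≤ r.choose 2 := Nat.choose_pos (by omega)
  have hdvd : 3 ∣ r.choose 2 := by
    rw [Nat.choose_two_right]
    rcases hmod with h6 | h6
    · obtain ⟨k, hk⟩ : ∃ k, r = 6 * k + 1 := ⟨r / 6, by omega⟩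
      have hk1 : r - 1 = 6 * k := by omega
      have h1 : r * (r - 1) = 2 * (3 * (k * (6 * k + 1))) := by
        rw [hk1, hk]; ring
      rw [h1, Nat.mul_div_cancel_left _ (by norm_num)]
      exact Dvd.intro _ rfl
    · obtain ⟨k, hk⟩ : ∃ k, r = 6 * k + 3 := ⟨r / 6, by omega⟩
      have hk1 : r - 1 = 6 * k + 2 := by omega
      have h1 : r * (r - 1) = 2 * (3 * ((2 * k + 1) * (3 * k + 1))) := by
        rw [hk1, hk]; ring
      rw [h1, Nat.mul_div_cancel_left _ (by norm_num)]
      exact Dvd.intro _ rfl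
  have hrodd : r % 2 = 1 := by omega
  -- instantiate the three counting equations
  have h0 := hf 0 (by norm_num)
  have h1 := hf 1 (by norm_num)
  have h2 := hf 2 (by norm_num)
  norm_num at h0 h1 h2
  -- the covered triples are exactly F
  have htriples : (V.powersetCard 3).filter (fun T => ∃ S ∈ F, T ⊆ S) = F := by
    ext T
    simp only [Finset.mem_filter, Finset.mem_powersetCard]
    constructor
    · rintro ⟨⟨hTV, hc⟩, S, hS, hTS⟩
      have hS3 := (hmem S hS).2
      have : T = S := Finset.eq_of_subset_of_card_le hTS (by omega)
      rwa [this]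
    · intro hT
      exact ⟨⟨(hmem T hT).1, (hmem T hT).2⟩, T, hT, Finset.Subset.refl T⟩
  rw [htriples] at h2
  have hFcard : 3 * F.card = r.choose 2 := by
    rw [← h2]; exact Nat.mul_div_cancel' hdvd
  -- the covered vertex set W
  set W : Finset ℕ := V.filter (fun v => ∃ S ∈ F, v ∈ S) with hW
  have hverts : (V.powersetCard 1).filter (fun T => ∃ S ∈ F, T ⊆ S)
      = W.image (fun v => ({v} : Finset ℕ)) := by
    ext T
    simp only [Finset.mem_filter, Finset.mem_powersetCard, Finset.mem_image, hW,
      Finset.mem_filter]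
    constructor
    · rintro ⟨⟨hTV, hc⟩, S, hS, hTS⟩
      obtain ⟨v, rfl⟩ := Finset.card_eq_one.mp hc
      exact ⟨v, ⟨hTV (Finset.mem_singleton_self v), S, hS,
        hTS (Finset.mem_singleton_self v)⟩, rfl⟩
    · rintro ⟨v, ⟨hvV, S, hS, hvS⟩, rfl⟩
      exact ⟨⟨Finset.singleton_subset_iff.mpr hvV, Finset.card_singleton v⟩,
        S, hS, Finset.singleton_subset_iff.mpr hvS⟩
  have hWcard : W.card = r := by
    rw [hverts, Finset.card_image_of_injective _ Finset.singleton_injective] at h0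
    omega
  -- the covered edge set E
  set E : Finset (Finset ℕ) :=
    (V.powersetCard 2).filter (fun T => ∃ S ∈ F, T ⊆ S) with hE
  have hEsubW : E ⊆ W.powersetCard 2 := by
    intro T hT
    rw [hE, Finset.mem_filter, Finset.mem_powersetCard] at hT
    obtain ⟨⟨hTV, hc⟩, S, hS, hTS⟩ := hT
    rw [Finset.mem_powersetCard]
    refine ⟨fun v hv => ?_, hc⟩
    rw [hW, Finset.mem_filter]
    exact ⟨hTV hv, S, hS, hTS hv⟩
  have hWpairs : (W.powersetCard 2).card = r.choose 2 := by
    rw [Finset.card_powersetCard, hWcard]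
  -- E misses exactly one pair e0 = {a, b}
  have hmiss : (W.powersetCard 2 \ E).card = 1 := by
    rw [Finset.card_sdiff_of_subset hEsubW, hWpairs, ← h1]
    omega
  obtain ⟨e0, he0⟩ := Finset.card_eq_one.mp hmiss
  have he0W : e0 ∈ W.powersetCard 2 ∧ e0 ∉ E := by
    have : e0 ∈ W.powersetCard 2 \ E := by rw [he0]; exact Finset.mem_singleton_self e0
    exact ⟨(Finset.mem_sdiff.mp this).1, (Finset.mem_sdiff.mp this).2⟩
  have he0c : e0.card = 2 := (Finset.mem_powersetCard.mp he0W.1).2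
  have he0sub : e0 ⊆ W := (Finset.mem_powersetCard.mp he0W.1).1
  -- E = all pairs of W except e0
  have hEeq : E = (W.powersetCard 2).erase e0 := by
    apply Finset.eq_of_subset_of_card_le
    · intro T hT
      rw [Finset.mem_erase]
      refine ⟨fun h => he0W.2 (h ▸ hT), hEsubW hT⟩
    · rw [Finset.card_erase_of_mem he0W.1, hWpairs, ← h1]
  -- multiplicity of an edge
  set mult : Finset ℕ → ℕ := fun T => (F.filter (fun S => T ⊆ S)).card with hmult
  have hmult1 : ∀ T ∈ E, 1 ≤ mult T := by
    intro T hT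
    rw [hE, Finset.mem_filter] at hT
    obtain ⟨_, S, hS, hTS⟩ := hT
    exact Finset.card_pos.mpr ⟨S, Finset.mem_filter.mpr ⟨hS, hTS⟩⟩
  -- total multiplicity over E is 3 * |F| = C(r,2)
  have hsumE : ∑ T ∈ E, mult T = r.choose 2 := by
    rw [hmult, my_double_count]
    have key : ∀ S ∈ F, E.filter (fun T => T ⊆ S) = S.powersetCard 2 := by
      intro S hS
      ext T
      simp only [Finset.mem_filter, Finset.mem_powersetCard, hE]
      constructor
      · rintro ⟨⟨⟨_, hc⟩, _⟩, hTS⟩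
        exact ⟨hTS, hc⟩
      · rintro ⟨hTS, hc⟩
        exact ⟨⟨⟨hTS.trans (hmem S hS).1, hc⟩, S, hS, hTS⟩, hTS⟩
    rw [Finset.sum_congr rfl (fun S hS => by
      rw [key S hS, Finset.card_powersetCard, (hmem S hS).2])]
    simp only [Finset.sum_const, smul_eq_mul]
    rw [show Nat.choose 3 2 = 3 by norm_num, ← hFcard]
    ring
  -- total excess is 1
  have hsplit : ∀ (X : Finset (Finset ℕ)), X ⊆ E →
      ∑ T ∈ X, mult T = (∑ T ∈ X, (mult T - 1)) + X.card := by
    intro X hX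
    rw [Finset.sum_congr rfl (fun T hT => by
      have := hmult1 T (hX hT); omega : ∀ T ∈ X, mult T = (mult T - 1) + 1)]
    rw [Finset.sum_add_distrib, Finset.sum_const, smul_eq_mul, mul_one]
  have hexcess : ∑ T ∈ E, (mult T - 1) = 1 := by
    have := hsplit E (Finset.Subset.refl E)
    rw [hsumE] at this
    have hEcard : E.card = r.choose 2 - 1 := h1.symm
    omega
  -- per-vertex analysis: for v an endpoint of e0, the doubled edge contains v
  have key : ∀ v ∈ e0, ∃ T0 ∈ E, v ∈ T0 ∧ 1 ≤ mult T0 - 1 := by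
    intro v hv
    have hvW : v ∈ W := he0sub hv
    set Ev : Finset (Finset ℕ) := E.filter (fun T => v ∈ T) with hEv
    have hEvsub : Ev ⊆ E := Finset.filter_subset _ _
    -- card of Ev is r - 2
    have hEvcard : Ev.card = r - 2 := by
      have : Ev = ((W.powersetCard 2).filter (fun T => v ∈ T)).erase e0 := by
        rw [hEv, hEeq]
        ext T
        simp only [Finset.mem_filter, Finset.mem_erase]
        tauto
      rw [this, Finset.card_erase_of_mem
        (Finset.mem_filter.mpr ⟨he0W.1, hv⟩), my_pairs_through W v hvW, hWcard]
      omega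
    -- total multiplicity over Ev is even
    have hEvsum : ∑ T ∈ Ev, mult T = (F.filter (fun S => v ∈ S)).card * 2 := by
      rw [hmult, my_double_count]
      have key2 : ∀ S ∈ F, (Ev.filter (fun T => T ⊆ S)).card
          = if v ∈ S then 2 else 0 := by
        intro S hS
        by_cases hvS : v ∈ S
        · rw [if_pos hvS]
          have heq : Ev.filter (fun T => T ⊆ S)
              = (S.powersetCard 2).filter (fun T => v ∈ T) := by
            ext T
            simp only [Finset.mem_filter, Finset.mem_powersetCard, hEv,
              Finset.mem_filter, hE]
            constructor
            · rintro ⟨⟨⟨⟨_, hc⟩, _⟩, hvT⟩, hTS⟩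
              exact ⟨⟨hTS, hc⟩, hvT⟩
            · rintro ⟨⟨hTS, hc⟩, hvT⟩
              exact ⟨⟨⟨⟨hTS.trans (hmem S hS).1, hc⟩, S, hS, hTS⟩, hvT⟩, hTS⟩
          rw [heq, my_pairs_through S v hvS, (hmem S hS).2]
        · rw [if_neg hvS]
          rw [Finset.card_eq_zero]
          apply Finset.filter_eq_empty_iff.mpr
          intro T hT hTS
          rw [hEv, Finset.mem_filter] at hT
          exact hvS (hTS hT.2)
      rw [Finset.sum_congr rfl key2, ← Finset.sum_filter, Finset.sum_const,
        smul_eq_mul]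
    -- parity forces the excess to live on an edge through v
    have hEvsplit := hsplit Ev hEvsub
    have hle : ∑ T ∈ Ev, (mult T - 1) ≤ 1 := by
      calc ∑ T ∈ Ev, (mult T - 1) ≤ ∑ T ∈ E, (mult T - 1) :=
            Finset.sum_le_sum_of_subset hEvsub
        _ = 1 := hexcess
    have hx1 : ∑ T ∈ Ev, (mult T - 1) = 1 := by
      rw [hEvsum, hEvcard] at hEvsplit
      omega
    by_contra hno
    push_neg at hno
    have hzero : ∑ T ∈ Ev, (mult T - 1) = 0 := by
      apply Finset.sum_eq_zero
      intro T hT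
      rw [hEv, Finset.mem_filter] at hT
      have := hno T hT.1 hT.2
      omega
    omega
  -- conclude: the doubled edge equals the missing edge, contradiction
  obtain ⟨a, b, hab, he0ab⟩ := Finset.card_eq_two.mp he0c
  obtain ⟨Ta, hTaE, haTa, hTa⟩ := key a (by rw [he0ab]; simp)
  obtain ⟨Tb, hTbE, hbTb, hTb⟩ := key b (by rw [he0ab]; simp)
  have hTab : Ta = Tb := by
    by_contra hne
    have hsub : ({Ta, Tb} : Finset (Finset ℕ)) ⊆ E := by
      intro T hT
      rcases Finset.mem_insert.mp hT with rfl | h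
      · exact hTaE
      · rwa [Finset.mem_singleton.mp h]
    have := Finset.sum_le_sum_of_subset (f := fun T => mult T - 1) hsub
    rw [Finset.sum_pair hne, hexcess] at this
    omega
  have hbTa : b ∈ Ta := hTab ▸ hbTb
  have hTac : Ta.card = 2 := (Finset.mem_powersetCard.mp (hEsubW hTaE)).2
  have he0Ta : e0 = Ta := by
    rw [he0ab]
    refine Finset.eq_of_subset_of_card_le ?_ ?_
    · intro x hx
      rcases Finset.mem_insert.mp hx with rfl | h
      · exact haTa
      · rwa [Finset.mem_singleton.mp h]
    · rw [Finset.card_pair hab, hTac]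
  exact he0W.2 (he0Ta ▸ hTaE)
end

section
/- The sequence (1, 7, 20, 7) is not a pure f-vector: there is no family of 7 distinct 3-element subsets of a 7-element set V such that every element of V lies in some member and exactly 20 of the 21 two-element subsets of V are contained in at least one member of the family. -/
open Finset

/-- The 2-subsets of `S` containing `v` are exactly `{v,w}` for `w ∈ S.erase v`. -/
lemma pairsAt_eq (S : Finset ℕ) (v : ℕ) (hv : v ∈ S) :
    (S.powersetCard 2).filter (fun T => v ∈ T) = (S.erase v).image (fun w => {v, w}) := by
  ext T
  simp only [mem_filter, mem_powersetCard, mem_image, mem_erase]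
  constructor
  · rintro ⟨⟨hTS, hT2⟩, hvT⟩
    have h1 : (T.erase v).card = 1 := by rw [card_erase_of_mem hvT, hT2]
    obtain ⟨w, hw⟩ := card_eq_one.mp h1
    have hwT : w ∈ T.erase v := hw ▸ mem_singleton_self w
    obtain ⟨hwv, hwTm⟩ := mem_erase.mp hwT
    refine ⟨w, ⟨hwv, hTS hwTm⟩, ?_⟩
    rw [show ({v, w} : Finset ℕ) = insert v {w} from rfl, ← hw, insert_erase hvT]
  · rintro ⟨w, ⟨hwv, hwS⟩, rfl⟩
    refine ⟨⟨?_, ?_⟩, mem_insert_self _ _⟩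
    · intro x hx
      rcases mem_insert.mp hx with rfl | hx
      · exact hv
      · exact (mem_singleton.mp hx) ▸ hwS
    · rw [card_insert_of_notMem (by simp [Ne.symm hwv]), card_singleton]

lemma pairsAt_card (S : Finset ℕ) (v : ℕ) (hv : v ∈ S) :
    ((S.powersetCard 2).filter (fun T => v ∈ T)).card = S.card - 1 := by
  rw [pairsAt_eq S v hv, card_image_of_injOn, card_erase_of_mem hv]
  intro a ha b hb hab
  have hab' : ({v, a} : Finset ℕ) = {v, b} := hab
  have haa : a ∈ ({v, b} : Finset ℕ) := hab' ▸ mem_insert_of_mem (mem_singleton_self a)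
  rcases mem_insert.mp haa with h | h
  · exact absurd h (mem_erase.mp ha).1
  · exact mem_singleton.mp h

/-- The sequence `(1, 7, 20, 7)` is not a pure f-vector. -/
theorem not_pure_fvector_7_20_7 :
    ¬ IsPureFVector 2 (fun i => if i = 0 then 7 else if i = 1 then 20 else 7) := by
  rintro ⟨V, F, hne, hF, hcount⟩
  have h0 := hcount 0 (by norm_num)
  have h1 := hcount 1 (by norm_num)
  have h2 := hcount 2 (by norm_num)
  norm_num at h0 h1 h2
  have hsub : ∀ S ∈ F, S ⊆ V := fun S hS => (hF S hS).1
  have hcard3 : ∀ S ∈ F, S.card = 3 := fun S hS => (hF S hS).2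
  set U : Finset ℕ := F.sup id with hUdef
  have hSU : ∀ S ∈ F, S ⊆ U := fun S hS => le_sup (f := id) hS
  have hUV : U ⊆ V := Finset.sup_le fun S hS => hsub S hS
  have hmemU : ∀ v, v ∈ U ↔ ∃ S ∈ F, v ∈ S := fun v => Finset.mem_sup
  -- |F| = 7
  have hF7 : F.card = 7 := by
    have heq : (V.powersetCard 3).filter (fun T => ∃ S ∈ F, T ⊆ S) = F := by
      ext T
      simp only [mem_filter, mem_powersetCard]
      constructor
      · rintro ⟨⟨hTV, hT3⟩, S, hSF, hTS⟩
        have : T = S := Finset.eq_of_subset_of_card_le hTS (by rw [hcard3 S hSF, hT3])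
        exact this ▸ hSF
      · intro hT
        exact ⟨⟨hsub T hT, hcard3 T hT⟩, T, hT, Finset.Subset.refl T⟩
    rw [heq] at h2
    omega
  -- |U| = 7
  have hU7 : U.card = 7 := by
    have heq : (V.powersetCard 1).filter (fun T => ∃ S ∈ F, T ⊆ S)
        = U.image (fun v => {v}) := by
      ext T
      simp only [mem_filter, mem_powersetCard, mem_image]
      constructor
      · rintro ⟨⟨hTV, hT1⟩, S, hSF, hTS⟩
        obtain ⟨v, rfl⟩ := card_eq_one.mp hT1
        refine ⟨v, ?_, rfl⟩
        rw [hmemU]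
        exact ⟨S, hSF, singleton_subset_iff.mp hTS⟩
      · rintro ⟨v, hv, rfl⟩
        obtain ⟨S, hSF, hvS⟩ := (hmemU v).mp hv
        exact ⟨⟨singleton_subset_iff.mpr (hsub S hSF hvS), card_singleton v⟩,
          S, hSF, singleton_subset_iff.mpr hvS⟩
    rw [heq, card_image_of_injective _ Finset.singleton_injective] at h0
    omega
  -- E = covered pairs, |E| = 20
  set E : Finset (Finset ℕ) :=
    (U.powersetCard 2).filter (fun T => ∃ S ∈ F, T ⊆ S) with hEdef
  have hEmem : ∀ T, T ∈ E ↔ (T ⊆ U ∧ T.card = 2) ∧ ∃ S ∈ F, T ⊆ S := by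
    intro T; simp only [hEdef, mem_filter, mem_powersetCard]
  have hE20 : E.card = 20 := by
    have heq : (V.powersetCard 2).filter (fun T => ∃ S ∈ F, T ⊆ S) = E := by
      ext T
      simp only [mem_filter, mem_powersetCard, hEdef]
      constructor
      · rintro ⟨⟨hTV, hT2⟩, S, hSF, hTS⟩
        exact ⟨⟨hTS.trans (hSU S hSF), hT2⟩, S, hSF, hTS⟩
      · rintro ⟨⟨hTU, hT2⟩, hcov⟩
        exact ⟨⟨hTU.trans hUV, hT2⟩, hcov⟩
    rw [heq] at h1
    omega
  -- edges of S ∈ F, as a subset of E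
  have hedgesS : ∀ S ∈ F, E.filter (fun T => T ⊆ S) = S.powersetCard 2 := by
    intro S hS
    ext T
    simp only [mem_filter, mem_powersetCard, hEmem]
    constructor
    · rintro ⟨⟨⟨_, hT2⟩, _⟩, hTS⟩
      exact ⟨hTS, hT2⟩
    · rintro ⟨hTS, hT2⟩
      exact ⟨⟨⟨hTS.trans (hSU S hS), hT2⟩, S, hS, hTS⟩, hTS⟩
  -- double counting: ∑_{T ∈ E} m T = 21
  have h21 : ∑ T ∈ E, (F.filter (fun S => T ⊆ S)).card = 21 := by
    have : ∑ T ∈ E, (F.filter (fun S => T ⊆ S)).card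
        = ∑ S ∈ F, (E.filter (fun T => T ⊆ S)).card := by
      simp only [card_filter]
      rw [Finset.sum_comm]
    rw [this]
    have : ∀ S ∈ F, (E.filter (fun T => T ⊆ S)).card = 3 := by
      intro S hS
      rw [hedgesS S hS, card_powersetCard, hcard3 S hS]
      decide
    rw [Finset.sum_congr rfl this, Finset.sum_const, hF7, smul_eq_mul]
  -- some pair T₀ is in two triangles
  have hmpos : ∀ T ∈ E, 1 ≤ (F.filter (fun S => T ⊆ S)).card := by
    intro T hT
    obtain ⟨_, S, hSF, hTS⟩ := (hEmem T).mp hT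
    exact card_pos.mpr ⟨S, mem_filter.mpr ⟨hSF, hTS⟩⟩
  have hT₀ : ∃ T₀ ∈ E, 2 ≤ (F.filter (fun S => T₀ ⊆ S)).card := by
    by_contra h
    push_neg at h
    have : ∀ T ∈ E, (F.filter (fun S => T ⊆ S)).card = 1 := by
      intro T hT
      have := hmpos T hT
      have := h T hT
      omega
    rw [Finset.sum_congr rfl this, Finset.sum_const, hE20, smul_eq_mul] at h21
    omega
  obtain ⟨T₀, hT₀E, hm2⟩ := hT₀
  obtain ⟨S₁, hS₁m, S₂, hS₂m, hS12⟩ := Finset.one_lt_card.mp (by omega : 1 < (F.filter (fun S => T₀ ⊆ S)).card)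
  obtain ⟨hS₁F, hT₀S₁⟩ := mem_filter.mp hS₁m
  obtain ⟨hS₂F, hT₀S₂⟩ := mem_filter.mp hS₂m
  obtain ⟨⟨hT₀U, hT₀2⟩, _⟩ := (hEmem T₀).mp hT₀E
  -- vertex degrees in triangles: ∑ t v = 21
  have h21v : ∑ v ∈ U, (F.filter (fun S => v ∈ S)).card = 21 := by
    have hswap : ∑ v ∈ U, (F.filter (fun S => v ∈ S)).card
        = ∑ S ∈ F, (U.filter (fun v => v ∈ S)).card := by
      simp only [card_filter]
      rw [Finset.sum_comm]
    have hUS : ∀ S ∈ F, (U.filter (fun v => v ∈ S)).card = 3 := by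
      intro S hS
      have : U.filter (fun v => v ∈ S) = S := by
        ext v
        simp only [mem_filter]
        exact ⟨fun h => h.2, fun h => ⟨hSU S hS h, h⟩⟩
      rw [this, hcard3 S hS]
    rw [hswap, Finset.sum_congr rfl hUS, Finset.sum_const, hF7, smul_eq_mul]
  -- handshake for covered pairs: ∑ d v = 40
  have h40 : ∑ v ∈ U, (E.filter (fun T => v ∈ T)).card = 40 := by
    have hswap : ∑ v ∈ U, (E.filter (fun T => v ∈ T)).card
        = ∑ T ∈ E, (U.filter (fun v => v ∈ T)).card := by
      simp only [card_filter]
      rw [Finset.sum_comm]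
    have hUT : ∀ T ∈ E, (U.filter (fun v => v ∈ T)).card = 2 := by
      intro T hT
      obtain ⟨⟨hTU, hT2⟩, _⟩ := (hEmem T).mp hT
      have : U.filter (fun v => v ∈ T) = T := by
        ext v
        simp only [mem_filter]
        exact ⟨fun h => h.2, fun h => ⟨hTU h, h⟩⟩
      rw [this, hT2]
    rw [hswap, Finset.sum_congr rfl hUT, Finset.sum_const, hE20, smul_eq_mul]
  -- pointwise bound: d v + [v ∈ T₀] ≤ 2 * t v
  have hbound : ∀ v ∈ U, (E.filter (fun T => v ∈ T)).card + (if v ∈ T₀ then 1 else 0)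
      ≤ 2 * (F.filter (fun S => v ∈ S)).card := by
    intro v hv
    by_cases hvT₀ : v ∈ T₀
    · -- improved bound using doubled pair T₀
      simp only [if_pos hvT₀]
      have hvS₁ : v ∈ S₁ := hT₀S₁ hvT₀
      have hvS₂ : v ∈ S₂ := hT₀S₂ hvT₀
      have hS₂f : S₂ ∈ F.filter (fun S => v ∈ S) := mem_filter.mpr ⟨hS₂F, hvS₂⟩
      have hS₁f : S₁ ∈ (F.filter (fun S => v ∈ S)).erase S₂ :=
        mem_erase.mpr ⟨hS12, mem_filter.mpr ⟨hS₁F, hvS₁⟩⟩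
      have hsubB : E.filter (fun T => v ∈ T) ⊆
          ((F.filter (fun S => v ∈ S)).erase S₂).biUnion
            (fun S => (S.powersetCard 2).filter (fun T => v ∈ T))
          ∪ ((S₂.powersetCard 2).filter (fun T => v ∈ T)).erase T₀ := by
        intro T hT
        obtain ⟨hTE, hvT⟩ := mem_filter.mp hT
        obtain ⟨⟨hTU, hT2⟩, S, hSF, hTS⟩ := (hEmem T).mp hTE
        have hTpS : T ∈ (S.powersetCard 2).filter (fun T => v ∈ T) :=
          mem_filter.mpr ⟨mem_powersetCard.mpr ⟨hTS, hT2⟩, hvT⟩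
        by_cases hSS₂ : S = S₂
        · subst hSS₂
          by_cases hTT₀ : T = T₀
          · subst hTT₀
            refine mem_union_left _ (mem_biUnion.mpr ⟨S₁, hS₁f, ?_⟩)
            exact mem_filter.mpr ⟨mem_powersetCard.mpr ⟨hT₀S₁, hT2⟩, hvT⟩
          · exact mem_union_right _ (mem_erase.mpr ⟨hTT₀, hTpS⟩)
        · refine mem_union_left _ (mem_biUnion.mpr ⟨S, ?_, hTpS⟩)
          exact mem_erase.mpr ⟨hSS₂, mem_filter.mpr ⟨hSF, hTS hvT⟩⟩
      have hcB : (((F.filter (fun S => v ∈ S)).erase S₂).biUnion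
            (fun S => (S.powersetCard 2).filter (fun T => v ∈ T))).card
          ≤ 2 * ((F.filter (fun S => v ∈ S)).card - 1) := by
        calc _ ≤ ∑ S ∈ (F.filter (fun S => v ∈ S)).erase S₂,
              ((S.powersetCard 2).filter (fun T => v ∈ T)).card := card_biUnion_le
          _ = ∑ S ∈ (F.filter (fun S => v ∈ S)).erase S₂, 2 := by
              refine Finset.sum_congr rfl fun S hS => ?_
              obtain ⟨_, hSm⟩ := mem_erase.mp hS
              obtain ⟨hSF, hvS⟩ := mem_filter.mp hSm
              rw [pairsAt_card S v hvS, hcard3 S hSF]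
          _ = 2 * ((F.filter (fun S => v ∈ S)).card - 1) := by
              rw [Finset.sum_const, card_erase_of_mem hS₂f, smul_eq_mul, Nat.mul_comm]
      have hcC : (((S₂.powersetCard 2).filter (fun T => v ∈ T)).erase T₀).card = 1 := by
        have hT₀p : T₀ ∈ (S₂.powersetCard 2).filter (fun T => v ∈ T) :=
          mem_filter.mpr ⟨mem_powersetCard.mpr ⟨hT₀S₂, hT₀2⟩, hvT₀⟩
        rw [card_erase_of_mem hT₀p, pairsAt_card S₂ v hvS₂, hcard3 S₂ hS₂F]
      have htpos : 1 ≤ (F.filter (fun S => v ∈ S)).card :=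
        card_pos.mpr ⟨S₂, hS₂f⟩
      have := (card_le_card hsubB).trans (card_union_le _ _)
      omega
    · simp only [if_neg hvT₀, add_zero]
      have hsubB : E.filter (fun T => v ∈ T) ⊆
          (F.filter (fun S => v ∈ S)).biUnion
            (fun S => (S.powersetCard 2).filter (fun T => v ∈ T)) := by
        intro T hT
        obtain ⟨hTE, hvT⟩ := mem_filter.mp hT
        obtain ⟨⟨hTU, hT2⟩, S, hSF, hTS⟩ := (hEmem T).mp hTE
        refine mem_biUnion.mpr ⟨S, mem_filter.mpr ⟨hSF, hTS hvT⟩, ?_⟩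
        exact mem_filter.mpr ⟨mem_powersetCard.mpr ⟨hTS, hT2⟩, hvT⟩
      calc (E.filter (fun T => v ∈ T)).card
          ≤ ((F.filter (fun S => v ∈ S)).biUnion
              (fun S => (S.powersetCard 2).filter (fun T => v ∈ T))).card :=
            card_le_card hsubB
        _ ≤ ∑ S ∈ F.filter (fun S => v ∈ S),
              ((S.powersetCard 2).filter (fun T => v ∈ T)).card := card_biUnion_le
        _ = ∑ S ∈ F.filter (fun S => v ∈ S), 2 := by
            refine Finset.sum_congr rfl fun S hS => ?_
            obtain ⟨hSF, hvS⟩ := mem_filter.mp hS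
            rw [pairsAt_card S v hvS, hcard3 S hSF]
        _ = 2 * (F.filter (fun S => v ∈ S)).card := by
            rw [Finset.sum_const, smul_eq_mul, Nat.mul_comm]
  -- sums are equal, so pointwise equality
  have hsum_eq : ∑ v ∈ U, ((E.filter (fun T => v ∈ T)).card + (if v ∈ T₀ then 1 else 0))
      = ∑ v ∈ U, 2 * (F.filter (fun S => v ∈ S)).card := by
    rw [Finset.sum_add_distrib, h40, ← Finset.mul_sum, h21v]
    have : ∑ v ∈ U, (if v ∈ T₀ then 1 else 0) = 2 := by
      rw [← card_filter]
      have : U.filter (fun v => v ∈ T₀) = T₀ := by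
        ext v
        simp only [mem_filter]
        exact ⟨fun h => h.2, fun h => ⟨hT₀U h, h⟩⟩
      rw [this, hT₀2]
    omega
  have hpt : ∀ v ∈ U, (E.filter (fun T => v ∈ T)).card + (if v ∈ T₀ then 1 else 0)
      = 2 * (F.filter (fun S => v ∈ S)).card :=
    (Finset.sum_eq_sum_iff_of_le hbound).mp hsum_eq
  -- the missing pair M
  have hEsub : E ⊆ U.powersetCard 2 := filter_subset _ _
  have hsdiff : (U.powersetCard 2 \ E).card = 1 := by
    rw [card_sdiff_of_subset hEsub, card_powersetCard, hU7, hE20]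
    decide
  obtain ⟨M, hM⟩ := card_eq_one.mp hsdiff
  have hMm : M ∈ U.powersetCard 2 \ E := hM ▸ mem_singleton_self M
  obtain ⟨hMp, hMnE⟩ := mem_sdiff.mp hMm
  obtain ⟨hMU, hM2⟩ := mem_powersetCard.mp hMp
  -- full degree for vertices not in M
  have hdv : ∀ v ∈ U, v ∉ M → (E.filter (fun T => v ∈ T)).card = 6 := by
    intro v hv hvM
    have heq : E.filter (fun T => v ∈ T) = (U.powersetCard 2).filter (fun T => v ∈ T) := by
      apply Finset.Subset.antisymm
      · exact filter_subset_filter _ hEsub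
      · intro T hT
        obtain ⟨hTp, hvT⟩ := mem_filter.mp hT
        refine mem_filter.mpr ⟨?_, hvT⟩
        by_contra hTE
        have : T ∈ U.powersetCard 2 \ E := mem_sdiff.mpr ⟨hTp, hTE⟩
        rw [hM, mem_singleton] at this
        exact hvM (this ▸ hvT)
    rw [heq, pairsAt_card U v hv, hU7]
  -- endgame: both elements of T₀ must be in M, so M = T₀ ∈ E, contradiction
  obtain ⟨x, y, hxy, hT₀xy⟩ := card_eq_two.mp hT₀2
  have hxT₀ : x ∈ T₀ := hT₀xy ▸ mem_insert_self x {y}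
  have hyT₀ : y ∈ T₀ := hT₀xy ▸ mem_insert_of_mem (mem_singleton_self y)
  have hxU : x ∈ U := hT₀U hxT₀
  have hyU : y ∈ U := hT₀U hyT₀
  have hxM : x ∈ M := by
    by_contra hxM
    have h6 := hdv x hxU hxM
    have := hpt x hxU
    rw [if_pos hxT₀, h6] at this
    omega
  have hyM : y ∈ M := by
    by_contra hyM
    have h6 := hdv y hyU hyM
    have := hpt y hyU
    rw [if_pos hyT₀, h6] at this
    omega
  have hT₀M : T₀ ⊆ M := by
    rw [hT₀xy]
    intro z hz
    rcases mem_insert.mp hz with rfl | hz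
    · exact hxM
    · exact (mem_singleton.mp hz) ▸ hyM
  have : T₀ = M := Finset.eq_of_subset_of_card_le hT₀M (by omega)
  exact hMnE (this ▸ hT₀E)
end
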